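/- arXiv:2206.08926 — 10 statements merged into one kernel-verified Lean document; each statement's English description precedes it below -/
import Mathlib

section
/- Let Σ ⊆ X ⊆ ℝ^N and Σ' ⊆ X' ⊆ ℝ^N be stratified samples with Σ and Σ' nonempty, and let δ > 0 satisfy d_H(X,X') < δ and d_H(Σ,Σ') < δ. Then the induced strongly stratified samples ε_s(X,Σ) = (X, s_Σ) and ε_s(X',Σ') = (X', s_{Σ'}) are 2δ-close: for every x ∈ X there is y ∈ X' with ‖x−y‖ ≤ 2δ and |min(dist(x,Σ),1) − min(dist(y,Σ'),1)| ≤ 2δ, and for every y ∈ X' there is x ∈ X with ‖x−y‖ ≤ 2δ and |min(dist(x,Σ),1) − min(dist(y,Σ'),1)| ≤ 2δ. (That is, the map ε_s from stratified samples to strongly stratified samples is 2-Lipschitz.) -/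
open Metric Set

/-- The induced strong stratification of a stratified sample `(X, Sg)`:
`s_Σ(x) := min (dist x Σ) 1`. -/
noncomputable def inducedStrat {N : ℕ} (Sg : Set (EuclideanSpace ℝ (Fin N)))
    (x : EuclideanSpace ℝ (Fin N)) : ℝ :=
  min (Metric.infDist x Sg) 1

lemma abs_min_one_sub_min_one_le {a b : ℝ} : |min a 1 - min b 1| ≤ |a - b| := by
  have h4 : a - b ≤ |a - b| := le_abs_self _
  have h5 : -|a - b| ≤ a - b := neg_abs_le _
  rcases le_total a 1 with h1 | h1 <;> rcases le_total b 1 with h2 | h2 <;>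
    rw [abs_le] <;> simp [min_eq_left, min_eq_right, *] <;> constructor <;> linarith

lemma key_bound {N : ℕ} (Sg Sg' : Set (EuclideanSpace ℝ (Fin N)))
    (hSg : Sg.Nonempty) (hSg' : Sg'.Nonempty)
    (δ : ℝ) (hδ : 0 < δ)
    (hS : EMetric.hausdorffEdist Sg Sg' < ENNReal.ofReal δ)
    (x y : EuclideanSpace ℝ (Fin N)) (hxy : dist x y ≤ δ) :
    |inducedStrat Sg x - inducedStrat Sg' y| ≤ 2 * δ := by
  have hne : EMetric.hausdorffEdist Sg Sg' ≠ ⊤ := hS.ne_top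
  have hH : Metric.hausdorffDist Sg Sg' ≤ δ := by
    rw [Metric.hausdorffDist]
    calc (EMetric.hausdorffEdist Sg Sg').toReal
        ≤ (ENNReal.ofReal δ).toReal := ENNReal.toReal_mono (by simp) hS.le
      _ = δ := ENNReal.toReal_ofReal hδ.le
  have h1 : infDist x Sg ≤ infDist y Sg' + (dist x y + hausdorffDist Sg' Sg) := by
    have := Metric.infDist_le_infDist_add_hausdorffDist (x := x) (s := Sg') (t := Sg)
      (by rw [EMetric.hausdorffEdist_comm]; exact hne)
    have h2 : infDist x Sg' ≤ infDist y Sg' + dist x y :=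
      Metric.infDist_le_infDist_add_dist
    linarith
  have h2 : infDist y Sg' ≤ infDist x Sg + (dist x y + hausdorffDist Sg Sg') := by
    have := Metric.infDist_le_infDist_add_hausdorffDist (x := y) (s := Sg) (t := Sg') hne
    have h2 : infDist y Sg ≤ infDist x Sg + dist x y := by
      simpa [dist_comm] using Metric.infDist_le_infDist_add_dist (x := y) (y := x) (s := Sg)
    linarith
  have hH' : Metric.hausdorffDist Sg' Sg ≤ δ := by rwa [Metric.hausdorffDist_comm]
  have habs : |infDist x Sg - infDist y Sg'| ≤ 2 * δ := by
    rw [abs_le]; constructor <;> linarith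
  exact le_trans abs_min_one_sub_min_one_le habs

/-- The map `ε_s` sending a stratified sample to its induced strongly stratified sample
is 2-Lipschitz: if `d_H(X,X') < δ` and `d_H(Σ,Σ') < δ`, then `(X, s_Σ)` and `(X', s_{Σ'})`
are `2δ`-close. -/
theorem strongStratification_two_lipschitz {N : ℕ}
    (X X' Sg Sg' : Set (EuclideanSpace ℝ (Fin N)))
    (hSgX : Sg ⊆ X) (hSgX' : Sg' ⊆ X')
    (hSg : Sg.Nonempty) (hSg' : Sg'.Nonempty)
    (δ : ℝ) (hδ : 0 < δ)
    (hX : EMetric.hausdorffEdist X X' < ENNReal.ofReal δ)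
    (hS : EMetric.hausdorffEdist Sg Sg' < ENNReal.ofReal δ) :
    (∀ x ∈ X, ∃ y ∈ X', ‖x - y‖ ≤ 2 * δ ∧
      |inducedStrat Sg x - inducedStrat Sg' y| ≤ 2 * δ) ∧
    (∀ y ∈ X', ∃ x ∈ X, ‖x - y‖ ≤ 2 * δ ∧
      |inducedStrat Sg x - inducedStrat Sg' y| ≤ 2 * δ) := by
  constructor
  · intro x hx
    obtain ⟨y, hy, hxy⟩ := EMetric.exists_edist_lt_of_hausdorffEdist_lt hx hX
    rw [edist_dist, ENNReal.ofReal_lt_ofReal_iff hδ] at hxy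
    refine ⟨y, hy, ?_, key_bound Sg Sg' hSg hSg' δ hδ hS x y hxy.le⟩
    rw [← dist_eq_norm]
    linarith
  · intro y hy
    obtain ⟨x, hx, hxy⟩ := EMetric.exists_edist_lt_of_hausdorffEdist_lt hy
      (by rwa [EMetric.hausdorffEdist_comm])
    rw [edist_dist, ENNReal.ofReal_lt_ofReal_iff hδ] at hxy
    rw [dist_comm] at hxy
    refine ⟨x, hx, ?_, key_bound Sg Sg' hSg hSg' δ hδ hS x y hxy.le⟩
    rw [← dist_eq_norm]
    linarith
end

section
/- Let (X,s) and (X',s') be strongly stratified samples of ℝ^N that are δ-close for some δ > 0, and let v = (v₁,v₂) ∈ Ω be such that v+δ := (v₁−δ, v₂+δ) ∈ Ω and v−δ := (v₁+δ, v₂−δ) ∈ Ω. Set M := the maximum, over the two parameters w ∈ {v+δ, v−δ}, of the maximum of the three componentwise Hausdorff distances between D_v(X,s) and D_w(X,s). Then each of the three componentwise Hausdorff distances between D_v(X,s) and D_v(X',s') is at most δ + M. -/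
open Metric Set
open scoped ENNReal

namespace Stmt3

variable {N : ℕ}

/-- Sublevel set `X_{≤ b}`. -/
def sub (X : Set (EuclideanSpace ℝ (Fin N))) (s : EuclideanSpace ℝ (Fin N) → ℝ) (b : ℝ) :
    Set (EuclideanSpace ℝ (Fin N)) := {x | x ∈ X ∧ s x ≤ b}

/-- Superlevel set `X_{≥ a}`. -/
def supl (X : Set (EuclideanSpace ℝ (Fin N))) (s : EuclideanSpace ℝ (Fin N) → ℝ) (a : ℝ) :
    Set (EuclideanSpace ℝ (Fin N)) := {x | x ∈ X ∧ a ≤ s x}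

/-- Interval level set `X^a_b`. -/
def ival (X : Set (EuclideanSpace ℝ (Fin N))) (s : EuclideanSpace ℝ (Fin N) → ℝ) (a b : ℝ) :
    Set (EuclideanSpace ℝ (Fin N)) := {x | x ∈ X ∧ a ≤ s x ∧ s x ≤ b}

/-- The parameter space `Ω = {(v₁,v₂) : 0 < v₁ < v₂ < 1}`. -/
def Omega : Set (ℝ × ℝ) := {p | 0 < p.1 ∧ p.1 < p.2 ∧ p.2 < 1}

/-- The stratification diagram `D_v(X,s) = (X_{≤v₂}, X^{v₁}_{v₂}, X_{≥v₁})`. -/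
def Dv (X : Set (EuclideanSpace ℝ (Fin N))) (s : EuclideanSpace ℝ (Fin N) → ℝ) (v : ℝ × ℝ) :
    Set (EuclideanSpace ℝ (Fin N)) × Set (EuclideanSpace ℝ (Fin N)) ×
      Set (EuclideanSpace ℝ (Fin N)) :=
  (sub X s v.2, ival X s v.1 v.2, supl X s v.1)

/-- Maximum of the three componentwise Hausdorff distances between two diagram triples. -/
noncomputable def diagDist
    (D D' : Set (EuclideanSpace ℝ (Fin N)) × Set (EuclideanSpace ℝ (Fin N)) ×
      Set (EuclideanSpace ℝ (Fin N))) : ℝ≥0∞ :=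
  max (EMetric.hausdorffEdist D.1 D'.1)
    (max (EMetric.hausdorffEdist D.2.1 D'.2.1) (EMetric.hausdorffEdist D.2.2 D'.2.2))

/-- Two strongly stratified samples are `δ`-close. -/
def StronglyClose (δ : ℝ) (X X' : Set (EuclideanSpace ℝ (Fin N)))
    (s s' : EuclideanSpace ℝ (Fin N) → ℝ) : Prop :=
  (∀ x ∈ X, ∃ y ∈ X', ‖x - y‖ ≤ δ ∧ |s x - s' y| ≤ δ) ∧
  (∀ y ∈ X', ∃ x ∈ X, ‖x - y‖ ≤ δ ∧ |s x - s' y| ≤ δ)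


/-!
The two diagrams are compared through the shrunken and enlarged diagrams of `(X,s)`:
δ-closeness moves a point by at most `δ` in space and in level, so it maps a level set of
`(X,s)` at parameter `v - δ` into the corresponding level set of `(X',s')` at `v`, and that
one into the level set of `(X,s)` at `v + δ`. Each Hausdorff distance therefore costs `δ` for
the move plus the distance of `D_v(X,s)` to `D_{v ± δ}(X,s)`.
-/

section Sandwich

variable {E : Type*} [PseudoEMetricSpace E]

theorem infEDist_le_infEDist_add_of_forall_exists_edist_le {B A' : Set E} {d : ℝ≥0∞}
    (h : ∀ b ∈ B, ∃ y ∈ A', edist b y ≤ d) (x : E) :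
    infEDist x A' ≤ infEDist x B + d := by
  refine tsub_le_iff_right.1 (le_infEDist.2 fun b hb => tsub_le_iff_right.2 ?_)
  obtain ⟨y, hy, hby⟩ := h b hb
  calc infEDist x A' ≤ edist x y := infEDist_le_edist_of_mem hy
    _ ≤ edist x b + edist b y := edist_triangle _ _ _
    _ ≤ edist x b + d := by gcongr

theorem hausdorffEDist_le_add_of_sandwich {A A' B C : Set E} {d M : ℝ≥0∞}
    (hAB : hausdorffEDist A B ≤ M) (hAC : hausdorffEDist A C ≤ M)
    (hBA' : ∀ b ∈ B, ∃ y ∈ A', edist b y ≤ d) (hA'C : ∀ y ∈ A', ∃ c ∈ C, edist y c ≤ d) :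
    hausdorffEDist A A' ≤ d + M := by
  refine hausdorffEDist_le_of_infEDist (fun x hx => ?_) (fun y hy => ?_)
  · calc infEDist x A' ≤ infEDist x B + d :=
          infEDist_le_infEDist_add_of_forall_exists_edist_le hBA' x
      _ ≤ M + d := by gcongr; exact (infEDist_le_hausdorffEDist_of_mem hx).trans hAB
      _ = d + M := add_comm _ _
  · obtain ⟨c, hc, hyc⟩ := hA'C y hy
    calc infEDist y A ≤ edist y c + infEDist c A := infEDist_le_edist_add_infEDist
      _ ≤ d + M := by
          gcongr
          exact (infEDist_le_hausdorffEDist_of_mem hc).trans (hausdorffEDist_comm.trans_le hAC)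

end Sandwich

section Levels

variable {N : ℕ} {X X' : Set (EuclideanSpace ℝ (Fin N))} {s s' : EuclideanSpace ℝ (Fin N) → ℝ}
  {δ : ℝ}

theorem StronglyClose.symm (h : StronglyClose δ X X' s s') : StronglyClose δ X' X s' s :=
  ⟨fun y hy => (h.2 y hy).imp fun _ ⟨hx, hxy, hs⟩ =>
      ⟨hx, by rwa [norm_sub_rev], by rwa [abs_sub_comm]⟩,
    fun x hx => (h.1 x hx).imp fun _ ⟨hy, hxy, hs⟩ =>
      ⟨hy, by rwa [norm_sub_rev], by rwa [abs_sub_comm]⟩⟩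

theorem StronglyClose.forall_exists_edist_le (h : StronglyClose δ X X' s s')
    {A B : Set (EuclideanSpace ℝ (Fin N))} (hA : A ⊆ X)
    (hB : ∀ x ∈ A, ∀ y ∈ X', |s x - s' y| ≤ δ → y ∈ B) :
    ∀ x ∈ A, ∃ y ∈ B, edist x y ≤ ENNReal.ofReal δ := by
  intro x hx
  obtain ⟨y, hy, hxy, hsxy⟩ := h.1 x (hA hx)
  refine ⟨y, hB x hx y hy hsxy, ?_⟩
  rw [edist_dist, dist_eq_norm]
  exact ENNReal.ofReal_le_ofReal hxy

variable {M : ℝ≥0∞}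

theorem diagDist_le_iff {D D' : Set (EuclideanSpace ℝ (Fin N)) ×
      Set (EuclideanSpace ℝ (Fin N)) × Set (EuclideanSpace ℝ (Fin N))} :
    diagDist D D' ≤ M ↔ hausdorffEDist D.1 D'.1 ≤ M ∧
      hausdorffEDist D.2.1 D'.2.1 ≤ M ∧ hausdorffEDist D.2.2 D'.2.2 ≤ M := by
  simp only [diagDist, max_le_iff]
  exact Iff.rfl

theorem StronglyClose.hausdorffEDist_sub_le (h : StronglyClose δ X X' s s') {b : ℝ}
    (hm : hausdorffEDist (sub X s b) (sub X s (b - δ)) ≤ M)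
    (hp : hausdorffEDist (sub X s b) (sub X s (b + δ)) ≤ M) :
    hausdorffEDist (sub X s b) (sub X' s' b) ≤ ENNReal.ofReal δ + M := by
  refine hausdorffEDist_le_add_of_sandwich hm hp
    (h.forall_exists_edist_le (fun _ hx => hx.1) ?_)
    (h.symm.forall_exists_edist_le (fun _ hx => hx.1) ?_) <;>
  · rintro x ⟨-, hx⟩ y hy hxy
    obtain ⟨h₁, h₂⟩ := abs_le.1 hxy
    exact ⟨hy, by linarith⟩

theorem StronglyClose.hausdorffEDist_ival_le (h : StronglyClose δ X X' s s') {a b : ℝ}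
    (hm : hausdorffEDist (ival X s a b) (ival X s (a + δ) (b - δ)) ≤ M)
    (hp : hausdorffEDist (ival X s a b) (ival X s (a - δ) (b + δ)) ≤ M) :
    hausdorffEDist (ival X s a b) (ival X' s' a b) ≤ ENNReal.ofReal δ + M := by
  refine hausdorffEDist_le_add_of_sandwich hm hp
    (h.forall_exists_edist_le (fun _ hx => hx.1) ?_)
    (h.symm.forall_exists_edist_le (fun _ hx => hx.1) ?_) <;>
  · rintro x ⟨-, hxa, hxb⟩ y hy hxy
    obtain ⟨h₁, h₂⟩ := abs_le.1 hxy
    exact ⟨hy, by linarith, by linarith⟩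

theorem StronglyClose.hausdorffEDist_supl_le (h : StronglyClose δ X X' s s') {a : ℝ}
    (hm : hausdorffEDist (supl X s a) (supl X s (a + δ)) ≤ M)
    (hp : hausdorffEDist (supl X s a) (supl X s (a - δ)) ≤ M) :
    hausdorffEDist (supl X s a) (supl X' s' a) ≤ ENNReal.ofReal δ + M := by
  refine hausdorffEDist_le_add_of_sandwich hm hp
    (h.forall_exists_edist_le (fun _ hx => hx.1) ?_)
    (h.symm.forall_exists_edist_le (fun _ hx => hx.1) ?_) <;>
  · rintro x ⟨-, hx⟩ y hy hxy
    obtain ⟨h₁, h₂⟩ := abs_le.1 hxy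
    exact ⟨hy, by linarith⟩

end Levels

theorem diagram_distance_bound_general {N : ℕ}
    (X X' : Set (EuclideanSpace ℝ (Fin N))) (s s' : EuclideanSpace ℝ (Fin N) → ℝ)
    (δ : ℝ) (hclose : StronglyClose δ X X' s s')
    (v₁ v₂ : ℝ) :
    diagDist (Dv X s (v₁, v₂)) (Dv X' s' (v₁, v₂)) ≤
      ENNReal.ofReal δ +
        max (diagDist (Dv X s (v₁, v₂)) (Dv X s (v₁ - δ, v₂ + δ)))
            (diagDist (Dv X s (v₁, v₂)) (Dv X s (v₁ + δ, v₂ - δ))) := by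
  set Mp := diagDist (Dv X s (v₁, v₂)) (Dv X s (v₁ - δ, v₂ + δ))
  set Mm := diagDist (Dv X s (v₁, v₂)) (Dv X s (v₁ + δ, v₂ - δ))
  obtain ⟨hp₁, hp₂, hp₃⟩ := diagDist_le_iff.1 (le_max_left Mp Mm)
  obtain ⟨hm₁, hm₂, hm₃⟩ := diagDist_le_iff.1 (le_max_right Mp Mm)
  exact diagDist_le_iff.2 ⟨hclose.hausdorffEDist_sub_le hm₁ hp₁,
    hclose.hausdorffEDist_ival_le hm₂ hp₂, hclose.hausdorffEDist_supl_le hm₃ hp₃⟩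

/-- If `(X,s)` and `(X',s')` are `δ`-close and `v ± δ ∈ Ω`, then the distance between
`D_v(X,s)` and `D_v(X',s')` is bounded by `δ` plus the maximal distance of `D_v(X,s)`
to `D_{v±δ}(X,s)`. -/
theorem diagram_distance_bound {N : ℕ}
    (X X' : Set (EuclideanSpace ℝ (Fin N))) (s s' : EuclideanSpace ℝ (Fin N) → ℝ)
    (hs : ∀ x ∈ X, s x ∈ Set.Icc (0 : ℝ) 1) (hs' : ∀ y ∈ X', s' y ∈ Set.Icc (0 : ℝ) 1)
    (δ : ℝ) (hδ : 0 < δ) (hclose : StronglyClose δ X X' s s')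
    (v₁ v₂ : ℝ) (hv : (v₁, v₂) ∈ Omega)
    (hvp : (v₁ - δ, v₂ + δ) ∈ Omega) (hvm : (v₁ + δ, v₂ - δ) ∈ Omega) :
    diagDist (Dv X s (v₁, v₂)) (Dv X' s' (v₁, v₂)) ≤
      ENNReal.ofReal δ +
        max (diagDist (Dv X s (v₁, v₂)) (Dv X s (v₁ - δ, v₂ + δ)))
            (diagDist (Dv X s (v₁, v₂)) (Dv X s (v₁ + δ, v₂ - δ))) :=
  diagram_distance_bound_general X X' s s' δ hclose v₁ v₂

end Stmt3
end

section
/- Let (X,s) and (X',s') be strongly stratified samples of ℝ^N that are δ-close for some δ > 0, and let u ∈ (0,1) with u−δ ∈ (0,1) and u+δ ∈ (0,1). Then max( d_H(X, X'), d_H(X_{≤u}, X'_{≤u}) ) ≤ δ + max( d_H(X_{≤u}, X_{≤u+δ}), d_H(X_{≤u}, X_{≤u−δ}) ). (That is, the distance between the stratified samples F_u(X,s) and F_u(X',s') is bounded by δ plus the maximal distance of F_u(X,s) to F_{u±δ}(X,s).) -/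
/-!
Closeness moves every point by at most `δ` in space and in stratification value, so it sends
`X_{≤u-δ}` into the `δ`-neighbourhood of `X'_{≤u}` and `X'_{≤u}` into the `δ`-neighbourhood of
`X_{≤u+δ}`. Chaining these with the distances from `X_{≤u}` to `X_{≤u∓δ}` through the triangle
inequality for the distance to a set bounds both halves of the Hausdorff distance.
-/

open Metric Set
open scoped ENNReal

namespace Stmt4

variable {N : ℕ}

/-- Sublevel set `X_{≤ b}`. -/
def sub (X : Set (EuclideanSpace ℝ (Fin N))) (s : EuclideanSpace ℝ (Fin N) → ℝ) (b : ℝ) :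
    Set (EuclideanSpace ℝ (Fin N)) := {x | x ∈ X ∧ s x ≤ b}

/-- Superlevel set `X_{≥ a}`. -/
def supl (X : Set (EuclideanSpace ℝ (Fin N))) (s : EuclideanSpace ℝ (Fin N) → ℝ) (a : ℝ) :
    Set (EuclideanSpace ℝ (Fin N)) := {x | x ∈ X ∧ a ≤ s x}

/-- Interval level set `X^a_b`. -/
def ival (X : Set (EuclideanSpace ℝ (Fin N))) (s : EuclideanSpace ℝ (Fin N) → ℝ) (a b : ℝ) :
    Set (EuclideanSpace ℝ (Fin N)) := {x | x ∈ X ∧ a ≤ s x ∧ s x ≤ b}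

/-- The parameter space `Ω = {(v₁,v₂) : 0 < v₁ < v₂ < 1}`. -/
def Omega : Set (ℝ × ℝ) := {p | 0 < p.1 ∧ p.1 < p.2 ∧ p.2 < 1}

/-- The stratification diagram `D_v(X,s) = (X_{≤v₂}, X^{v₁}_{v₂}, X_{≥v₁})`. -/
def Dv (X : Set (EuclideanSpace ℝ (Fin N))) (s : EuclideanSpace ℝ (Fin N) → ℝ) (v : ℝ × ℝ) :
    Set (EuclideanSpace ℝ (Fin N)) × Set (EuclideanSpace ℝ (Fin N)) ×
      Set (EuclideanSpace ℝ (Fin N)) :=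
  (sub X s v.2, ival X s v.1 v.2, supl X s v.1)

noncomputable def diagDist
    (D D' : Set (EuclideanSpace ℝ (Fin N)) × Set (EuclideanSpace ℝ (Fin N)) ×
      Set (EuclideanSpace ℝ (Fin N))) : ℝ≥0∞ :=
  max (EMetric.hausdorffEdist D.1 D'.1)
    (max (EMetric.hausdorffEdist D.2.1 D'.2.1) (EMetric.hausdorffEdist D.2.2 D'.2.2))

def StronglyClose (δ : ℝ) (X X' : Set (EuclideanSpace ℝ (Fin N)))
    (s s' : EuclideanSpace ℝ (Fin N) → ℝ) : Prop :=
  (∀ x ∈ X, ∃ y ∈ X', ‖x - y‖ ≤ δ ∧ |s x - s' y| ≤ δ) ∧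
  (∀ y ∈ X', ∃ x ∈ X, ‖x - y‖ ≤ δ ∧ |s x - s' y| ≤ δ)

lemma _root_.Metric.infEDist_le_infEDist_add_of_forall_infEDist_le {E : Type*}
    [PseudoEMetricSpace E] {S T : Set E} {a : ℝ≥0∞} (h : ∀ z ∈ S, infEDist z T ≤ a) (x : E) :
    infEDist x T ≤ infEDist x S + a := by
  calc infEDist x T ≤ ⨅ z ∈ S, (edist x z + a) := le_iInf₂ fun z hz =>
        infEDist_le_edist_add_infEDist.trans (by gcongr; exact h z hz)
    _ = infEDist x S + a := by simp only [infEDist, ENNReal.iInf_add]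

section StronglyClose

variable {δ : ℝ} {X X' : Set (EuclideanSpace ℝ (Fin N))} {s s' : EuclideanSpace ℝ (Fin N) → ℝ}
  {x : EuclideanSpace ℝ (Fin N)}

lemma StronglyClose.symm (h : StronglyClose δ X X' s s') : StronglyClose δ X' X s' s := by
  constructor
  · intro y hy
    obtain ⟨x, hx, hxy, hsxy⟩ := h.2 y hy
    exact ⟨x, hx, by rwa [norm_sub_rev], by rwa [abs_sub_comm]⟩
  · intro x hx
    obtain ⟨y, hy, hxy, hsxy⟩ := h.1 x hx
    exact ⟨y, hy, by rwa [norm_sub_rev], by rwa [abs_sub_comm]⟩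

lemma StronglyClose.exists_mem_edist_le (h : StronglyClose δ X X' s s') (hx : x ∈ X) :
    ∃ y ∈ X', s' y ≤ s x + δ ∧ edist x y ≤ ENNReal.ofReal δ := by
  obtain ⟨y, hy, hxy, hsxy⟩ := h.1 x hx
  refine ⟨y, hy, by linarith [abs_le.1 hsxy], ?_⟩
  rw [edist_dist, dist_eq_norm]
  exact ENNReal.ofReal_le_ofReal hxy

lemma StronglyClose.hausdorffEDist_le (h : StronglyClose δ X X' s s') :
    hausdorffEDist X X' ≤ ENNReal.ofReal δ := by
  refine hausdorffEDist_le_of_mem_edist (fun x hx => ?_) (fun y hy => ?_)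
  · obtain ⟨y, hy, -, hxy⟩ := h.exists_mem_edist_le hx
    exact ⟨y, hy, hxy⟩
  · obtain ⟨x, hx, -, hxy⟩ := h.symm.exists_mem_edist_le hy
    exact ⟨x, hx, hxy⟩

lemma StronglyClose.infEDist_sub_le (h : StronglyClose δ X X' s s') {b : ℝ}
    (hx : x ∈ sub X s b) : infEDist x (sub X' s' (b + δ)) ≤ ENNReal.ofReal δ := by
  obtain ⟨y, hy, hsy, hxy⟩ := h.exists_mem_edist_le hx.1
  refine (infEDist_le_edist_of_mem ?_).trans hxy
  exact ⟨hy, by linarith [hx.2]⟩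

end StronglyClose

theorem forgetful_distance_bound_general {N : ℕ}
    (X X' : Set (EuclideanSpace ℝ (Fin N))) (s s' : EuclideanSpace ℝ (Fin N) → ℝ)
    (δ : ℝ) (hclose : StronglyClose δ X X' s s')
    (u : ℝ) :
    max (EMetric.hausdorffEdist X X')
        (EMetric.hausdorffEdist (sub X s u) (sub X' s' u)) ≤
      ENNReal.ofReal δ +
        max (EMetric.hausdorffEdist (sub X s u) (sub X s (u + δ)))
            (EMetric.hausdorffEdist (sub X s u) (sub X s (u - δ))) := by
  refine max_le (hclose.hausdorffEDist_le.trans le_self_add) ?_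
  refine hausdorffEDist_le_of_infEDist (fun x hx => ?_) (fun y hy => ?_)
  · have lower_to_X' : ∀ z ∈ sub X s (u - δ), infEDist z (sub X' s' u) ≤ ENNReal.ofReal δ :=
      fun z hz => sub_add_cancel u δ ▸ hclose.infEDist_sub_le hz
    calc infEDist x (sub X' s' u)
        ≤ infEDist x (sub X s (u - δ)) + ENNReal.ofReal δ :=
          infEDist_le_infEDist_add_of_forall_infEDist_le lower_to_X' x
      _ ≤ hausdorffEDist (sub X s u) (sub X s (u - δ)) + ENNReal.ofReal δ := by
          gcongr; exact infEDist_le_hausdorffEDist_of_mem hx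
      _ ≤ _ := by rw [add_comm]; gcongr; exact le_max_right _ _
  · calc infEDist y (sub X s u)
        ≤ infEDist y (sub X s (u + δ)) + hausdorffEDist (sub X s (u + δ)) (sub X s u) :=
          infEDist_le_infEDist_add_hausdorffEDist
      _ ≤ ENNReal.ofReal δ + hausdorffEDist (sub X s u) (sub X s (u + δ)) := by
          rw [hausdorffEDist_comm]; gcongr; exact hclose.symm.infEDist_sub_le hy
      _ ≤ _ := by gcongr; exact le_max_left _ _

/-- If `(X,s)` and `(X',s')` are `δ`-close and `u ± δ ∈ (0,1)`, then the stratified-sample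
distance between `F_u(X,s)` and `F_u(X',s')` is bounded by `δ` plus the maximal distance
of `F_u(X,s)` to `F_{u±δ}(X,s)`. -/
theorem forgetful_distance_bound {N : ℕ}
    (X X' : Set (EuclideanSpace ℝ (Fin N))) (s s' : EuclideanSpace ℝ (Fin N) → ℝ)
    (hs : ∀ x ∈ X, s x ∈ Set.Icc (0 : ℝ) 1) (hs' : ∀ y ∈ X', s' y ∈ Set.Icc (0 : ℝ) 1)
    (δ : ℝ) (hδ : 0 < δ) (hclose : StronglyClose δ X X' s s')
    (u : ℝ) (hu : u ∈ Set.Ioo (0 : ℝ) 1)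
    (hum : u - δ ∈ Set.Ioo (0 : ℝ) 1) (hup : u + δ ∈ Set.Ioo (0 : ℝ) 1) :
    max (EMetric.hausdorffEdist X X')
        (EMetric.hausdorffEdist (sub X s u) (sub X' s' u)) ≤
      ENNReal.ofReal δ +
        max (EMetric.hausdorffEdist (sub X s u) (sub X s (u + δ)))
            (EMetric.hausdorffEdist (sub X s u) (sub X s (u - δ))) :=
  forgetful_distance_bound_general X X' s s' δ hclose u

end Stmt4
end

section
/- Let δ > 0 and u ∈ (0,1) with u−δ ∈ (0,1) and u+δ ∈ (0,1). Let (X,s) be a strongly stratified sample of ℝ^N such that X_{≤u−δ} = X_{≤u} = X_{≤u+δ}. Then for every 0 < η ≤ δ and every strongly stratified sample (X',s') that is η-close to (X,s), one has d_H(X, X') ≤ η and d_H(X_{≤u}, X'_{≤u}) ≤ η. (That is, the forgetful map F_u is 1-Lipschitz at (X,s) on a ball of radius δ.) -/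
open Metric Set
open scoped ENNReal

namespace Stmt5

variable {N : ℕ}

/-- Sublevel set `X_{≤ b}`. -/
def sub (X : Set (EuclideanSpace ℝ (Fin N))) (s : EuclideanSpace ℝ (Fin N) → ℝ) (b : ℝ) :
    Set (EuclideanSpace ℝ (Fin N)) := {x | x ∈ X ∧ s x ≤ b}

/-- Superlevel set `X_{≥ a}`. -/
def supl (X : Set (EuclideanSpace ℝ (Fin N))) (s : EuclideanSpace ℝ (Fin N) → ℝ) (a : ℝ) :
    Set (EuclideanSpace ℝ (Fin N)) := {x | x ∈ X ∧ a ≤ s x}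

/-- Interval level set `X^a_b`. -/
def ival (X : Set (EuclideanSpace ℝ (Fin N))) (s : EuclideanSpace ℝ (Fin N) → ℝ) (a b : ℝ) :
    Set (EuclideanSpace ℝ (Fin N)) := {x | x ∈ X ∧ a ≤ s x ∧ s x ≤ b}

/-- The parameter space `Ω = {(v₁,v₂) : 0 < v₁ < v₂ < 1}`. -/
def Omega : Set (ℝ × ℝ) := {p | 0 < p.1 ∧ p.1 < p.2 ∧ p.2 < 1}

/-- The stratification diagram `D_v(X,s) = (X_{≤v₂}, X^{v₁}_{v₂}, X_{≥v₁})`. -/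
def Dv (X : Set (EuclideanSpace ℝ (Fin N))) (s : EuclideanSpace ℝ (Fin N) → ℝ) (v : ℝ × ℝ) :
    Set (EuclideanSpace ℝ (Fin N)) × Set (EuclideanSpace ℝ (Fin N)) ×
      Set (EuclideanSpace ℝ (Fin N)) :=
  (sub X s v.2, ival X s v.1 v.2, supl X s v.1)

/-- Maximum of the three componentwise Hausdorff distances between two diagram triples. -/
noncomputable def diagDist
    (D D' : Set (EuclideanSpace ℝ (Fin N)) × Set (EuclideanSpace ℝ (Fin N)) ×
      Set (EuclideanSpace ℝ (Fin N))) : ℝ≥0∞ :=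
  max (EMetric.hausdorffEdist D.1 D'.1)
    (max (EMetric.hausdorffEdist D.2.1 D'.2.1) (EMetric.hausdorffEdist D.2.2 D'.2.2))

/-- Two strongly stratified samples are `δ`-close. -/
def StronglyClose (δ : ℝ) (X X' : Set (EuclideanSpace ℝ (Fin N)))
    (s s' : EuclideanSpace ℝ (Fin N) → ℝ) : Prop :=
  (∀ x ∈ X, ∃ y ∈ X', ‖x - y‖ ≤ δ ∧ |s x - s' y| ≤ δ) ∧
  (∀ y ∈ X', ∃ x ∈ X, ‖x - y‖ ≤ δ ∧ |s x - s' y| ≤ δ)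

/-- If the sublevel sets of `(X,s)` are constant on `[u-δ, u+δ]`, then the forgetful map
`F_u` is 1-Lipschitz at `(X,s)` on a ball of radius `δ`. -/
theorem forgetful_one_lipschitz_of_locally_constant {N : ℕ}
    (X : Set (EuclideanSpace ℝ (Fin N))) (s : EuclideanSpace ℝ (Fin N) → ℝ)
    (hs : ∀ x ∈ X, s x ∈ Set.Icc (0 : ℝ) 1)
    (δ : ℝ) (hδ : 0 < δ)
    (u : ℝ) (hu : u ∈ Set.Ioo (0 : ℝ) 1)
    (hum : u - δ ∈ Set.Ioo (0 : ℝ) 1) (hup : u + δ ∈ Set.Ioo (0 : ℝ) 1)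
    (heq₁ : sub X s (u - δ) = sub X s u) (heq₂ : sub X s u = sub X s (u + δ)) :
    ∀ η : ℝ, 0 < η → η ≤ δ →
      ∀ (X' : Set (EuclideanSpace ℝ (Fin N))) (s' : EuclideanSpace ℝ (Fin N) → ℝ),
        (∀ y ∈ X', s' y ∈ Set.Icc (0 : ℝ) 1) →
        StronglyClose η X X' s s' →
        EMetric.hausdorffEdist X X' ≤ ENNReal.ofReal η ∧
        EMetric.hausdorffEdist (sub X s u) (sub X' s' u) ≤ ENNReal.ofReal η := by
  intro η hη hηδ X' s' hs' ⟨h1, h2⟩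
  have hed : ∀ x y : EuclideanSpace ℝ (Fin N), ‖x - y‖ ≤ η → edist x y ≤ ENNReal.ofReal η := by
    intro x y h
    rw [edist_le_ofReal hη.le, dist_eq_norm]; exact h
  constructor
  · apply EMetric.hausdorffEdist_le_of_mem_edist
    · intro x hx
      obtain ⟨y, hy, hny, -⟩ := h1 x hx
      exact ⟨y, hy, hed x y hny⟩
    · intro y hy
      obtain ⟨x, hx, hnx, -⟩ := h2 y hy
      exact ⟨x, hx, (edist_comm y x ▸ hed x y hnx)⟩
  · apply EMetric.hausdorffEdist_le_of_mem_edist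
    · intro x hx
      have hx' : x ∈ sub X s (u - δ) := heq₁ ▸ hx
      obtain ⟨y, hy, hny, hsy⟩ := h1 x hx.1
      refine ⟨y, ⟨hy, ?_⟩, hed x y hny⟩
      have := abs_le.1 hsy
      linarith [hx'.2]
    · intro y hy
      obtain ⟨x, hx, hnx, hsx⟩ := h2 y hy.1
      have hxsub : x ∈ sub X s (u + δ) := by
        refine ⟨hx, ?_⟩
        have := abs_le.1 hsx
        linarith [hy.2]
      refine ⟨x, heq₂ ▸ hxsub, edist_comm y x ▸ hed x y hnx⟩


end Stmt5
end

section
/- Let (X,Σ) and (X',Σ') be stratified samples of ℝ^N with Σ and Σ' nonempty, and let δ > 0 satisfy d_H(X,X') < δ and d_H(Σ,Σ') < δ. Write s := s_Σ and s' := s_{Σ'} for the induced strong stratifications. Then for all real numbers 0 ≤ v' ≤ v ≤ 1: {y ∈ X' : v' ≤ s'(y) ≤ v} is contained in the closed 2δ-thickening of {x ∈ X : v'−2δ ≤ s(x) ≤ v+2δ}, and {x ∈ X : v' ≤ s(x) ≤ v} is contained in the closed 2δ-thickening of {y ∈ X' : v'−2δ ≤ s'(y) ≤ v+2δ}. (This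 is the concrete content of the statement that the parameter-free persistent stratified homotopy type ε_pers is 2-Lipschitz with respect to the stratified Hausdorff distance and the flow interleaving distance.) -/
open Metric Set
open scoped ENNReal

/-! Moving the point by at most `δ` and the set `Σ` by Hausdorff distance less than `δ` moves
`s_Σ` by at most `2δ`, since `infDist` is 1-Lipschitz in both arguments and truncation at `1`
is 1-Lipschitz. A point of one sample with `s` in `[v', v]` therefore has a `δ`-close point of
the other sample with `s` in `[v' - 2δ, v + 2δ]`. -/

namespace Metric

variable {α : Type*} [PseudoMetricSpace α] {s t : Set α} {x y : α}

theorem infDist_le_infDist_add_dist_add_hausdorffDist (fin : hausdorffEDist t s ≠ ⊤) :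
    infDist x s ≤ infDist y t + dist x y + hausdorffDist t s := by
  linarith [infDist_le_infDist_add_hausdorffDist (x := x) fin,
    infDist_le_infDist_add_dist (x := x) (y := y) (s := t)]

theorem abs_infDist_sub_infDist_le (fin : hausdorffEDist s t ≠ ⊤) :
    |infDist x s - infDist y t| ≤ dist x y + hausdorffDist s t := by
  have fin' : hausdorffEDist t s ≠ ⊤ := by rwa [hausdorffEDist_comm]
  rw [abs_sub_le_iff]
  constructor
  · linarith [infDist_le_infDist_add_dist_add_hausdorffDist (x := x) (y := y) fin',
      hausdorffDist_comm (s := s) (t := t)]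
  · linarith [infDist_le_infDist_add_dist_add_hausdorffDist (x := y) (y := x) fin,
      dist_comm x y]

end Metric

theorem abs_inducedStrat_sub_le {N : ℕ} {Sg Sg' : Set (EuclideanSpace ℝ (Fin N))} {δ : ℝ}
    (hS : hausdorffEDist Sg Sg' < ENNReal.ofReal δ) {x y : EuclideanSpace ℝ (Fin N)}
    (hxy : dist x y ≤ δ) : |inducedStrat Sg x - inducedStrat Sg' y| ≤ 2 * δ := by
  have hδ : 0 < δ := ENNReal.ofReal_pos.mp (pos_of_gt hS)
  have hD : hausdorffDist Sg Sg' ≤ δ := ENNReal.toReal_le_of_le_ofReal hδ.le hS.le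
  calc |inducedStrat Sg x - inducedStrat Sg' y|
      ≤ max |infDist x Sg - infDist y Sg'| |1 - 1| := abs_min_sub_min_le_max _ _ _ _
    _ = |infDist x Sg - infDist y Sg'| := by simp
    _ ≤ dist x y + hausdorffDist Sg Sg' := abs_infDist_sub_infDist_le hS.ne_top
    _ ≤ 2 * δ := by linarith

theorem levelSet_subset_near_levelSet {E : Type*} [SeminormedAddCommGroup E] {A B : Set E}
    {f g : E → ℝ} {a b c δ ε : ℝ} (hBA : hausdorffEDist B A < ENNReal.ofReal δ) (hδε : δ ≤ ε)
    (hfg : ∀ x y, dist x y ≤ δ → |f x - g y| ≤ c) :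
    {y | y ∈ B ∧ a ≤ g y ∧ g y ≤ b} ⊆
      {z | ∃ x ∈ {x | x ∈ A ∧ a - c ≤ f x ∧ f x ≤ b + c}, ‖x - z‖ ≤ ε} := by
  rintro y ⟨hyB, hay, hyb⟩
  obtain ⟨x, hxA, hyx⟩ := exists_edist_lt_of_hausdorffEDist_lt hyB hBA
  have hxy : dist x y ≤ δ := (dist_comm x y ▸ edist_lt_ofReal.mp hyx).le
  have hfgxy := abs_sub_le_iff.mp (hfg x y hxy)
  exact ⟨x, ⟨hxA, by linarith, by linarith⟩, by rw [← dist_eq_norm]; linarith⟩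

theorem persistent_stratified_two_lipschitz_general {N : ℕ}
    (X X' Sg Sg' : Set (EuclideanSpace ℝ (Fin N)))
    (δ : ℝ) (hδ : 0 < δ)
    (hX : EMetric.hausdorffEdist X X' < ENNReal.ofReal δ)
    (hS : EMetric.hausdorffEdist Sg Sg' < ENNReal.ofReal δ)
    (v' v : ℝ) :
    {y | y ∈ X' ∧ v' ≤ inducedStrat Sg' y ∧ inducedStrat Sg' y ≤ v} ⊆
      {z | ∃ x ∈ {x | x ∈ X ∧ v' - 2 * δ ≤ inducedStrat Sg x ∧
        inducedStrat Sg x ≤ v + 2 * δ}, ‖x - z‖ ≤ 2 * δ} ∧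
    {x | x ∈ X ∧ v' ≤ inducedStrat Sg x ∧ inducedStrat Sg x ≤ v} ⊆
      {z | ∃ y ∈ {y | y ∈ X' ∧ v' - 2 * δ ≤ inducedStrat Sg' y ∧
        inducedStrat Sg' y ≤ v + 2 * δ}, ‖y - z‖ ≤ 2 * δ} := by
  have hδ2 : δ ≤ 2 * δ := by linarith
  refine ⟨levelSet_subset_near_levelSet (by rwa [hausdorffEDist_comm]) hδ2
      fun x y hxy => abs_inducedStrat_sub_le hS hxy,
    levelSet_subset_near_levelSet hX hδ2 fun y x hyx => ?_⟩
  rw [abs_sub_comm]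
  exact abs_inducedStrat_sub_le hS (dist_comm y x ▸ hyx)

/-- 2-Lipschitz continuity of the parameter-free persistent stratified homotopy type,
in concrete form: if `d_H(X,X') < δ` and `d_H(Σ,Σ') < δ` then the interval level sets of
the induced strong stratifications are mutually contained in closed `2δ`-thickenings of
the `2δ`-enlarged interval level sets of the other. -/
theorem persistent_stratified_two_lipschitz {N : ℕ}
    (X X' Sg Sg' : Set (EuclideanSpace ℝ (Fin N)))
    (hSgX : Sg ⊆ X) (hSgX' : Sg' ⊆ X')
    (hSg : Sg.Nonempty) (hSg' : Sg'.Nonempty)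
    (δ : ℝ) (hδ : 0 < δ)
    (hX : EMetric.hausdorffEdist X X' < ENNReal.ofReal δ)
    (hS : EMetric.hausdorffEdist Sg Sg' < ENNReal.ofReal δ)
    (v' v : ℝ) (h0 : 0 ≤ v') (hvv : v' ≤ v) (hv1 : v ≤ 1) :
    {y | y ∈ X' ∧ v' ≤ inducedStrat Sg' y ∧ inducedStrat Sg' y ≤ v} ⊆
      {z | ∃ x ∈ {x | x ∈ X ∧ v' - 2 * δ ≤ inducedStrat Sg x ∧
        inducedStrat Sg x ≤ v + 2 * δ}, ‖x - z‖ ≤ 2 * δ} ∧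
    {x | x ∈ X ∧ v' ≤ inducedStrat Sg x ∧ inducedStrat Sg x ≤ v} ⊆
      {z | ∃ y ∈ {y | y ∈ X' ∧ v' - 2 * δ ≤ inducedStrat Sg' y ∧
        inducedStrat Sg' y ≤ v + 2 * δ}, ‖y - z‖ ≤ 2 * δ} :=
  persistent_stratified_two_lipschitz_general X X' Sg Sg' δ hδ hX hS v' v
end

section
/- Let (X,s) be a strongly stratified sample of ℝ^N, let v = (v₁,v₂) and v' = (v₁',v₂') be elements of Ω, and set a := min(v₁,v₁') and b := max(v₂,v₂'). Then each of the three componentwise Hausdorff distances between D_v(X,s) and D_{v'}(X,s) is at most max( d_H(X^{v₁}_{v₂}, X^{v₁'}_{v₂'}), d_H(X^{a}_{v₂}, X^{a}_{v₂'}), d_H(X^{v₁}_{b}, X^{v₁'}_{b}) ). -/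
open Metric Set
open scoped ENNReal

namespace Stmt7

variable {N : ℕ}

/-- Sublevel set `X_{≤ b}`. -/
def sub (X : Set (EuclideanSpace ℝ (Fin N))) (s : EuclideanSpace ℝ (Fin N) → ℝ) (b : ℝ) :
    Set (EuclideanSpace ℝ (Fin N)) := {x | x ∈ X ∧ s x ≤ b}

/-- Superlevel set `X_{≥ a}`. -/
def supl (X : Set (EuclideanSpace ℝ (Fin N))) (s : EuclideanSpace ℝ (Fin N) → ℝ) (a : ℝ) :
    Set (EuclideanSpace ℝ (Fin N)) := {x | x ∈ X ∧ a ≤ s x}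

/-- Interval level set `X^a_b`. -/
def ival (X : Set (EuclideanSpace ℝ (Fin N))) (s : EuclideanSpace ℝ (Fin N) → ℝ) (a b : ℝ) :
    Set (EuclideanSpace ℝ (Fin N)) := {x | x ∈ X ∧ a ≤ s x ∧ s x ≤ b}

/-- The parameter space `Ω = {(v₁,v₂) : 0 < v₁ < v₂ < 1}`. -/
def Omega : Set (ℝ × ℝ) := {p | 0 < p.1 ∧ p.1 < p.2 ∧ p.2 < 1}

/-- The stratification diagram `D_v(X,s) = (X_{≤v₂}, X^{v₁}_{v₂}, X_{≥v₁})`. -/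
def Dv (X : Set (EuclideanSpace ℝ (Fin N))) (s : EuclideanSpace ℝ (Fin N) → ℝ) (v : ℝ × ℝ) :
    Set (EuclideanSpace ℝ (Fin N)) × Set (EuclideanSpace ℝ (Fin N)) ×
      Set (EuclideanSpace ℝ (Fin N)) :=
  (sub X s v.2, ival X s v.1 v.2, supl X s v.1)

/-- Maximum of the three componentwise Hausdorff distances between two diagram triples. -/
noncomputable def diagDist
    (D D' : Set (EuclideanSpace ℝ (Fin N)) × Set (EuclideanSpace ℝ (Fin N)) ×
      Set (EuclideanSpace ℝ (Fin N))) : ℝ≥0∞ :=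
  max (EMetric.hausdorffEdist D.1 D'.1)
    (max (EMetric.hausdorffEdist D.2.1 D'.2.1) (EMetric.hausdorffEdist D.2.2 D'.2.2))

/-- Two strongly stratified samples are `δ`-close. -/
def StronglyClose (δ : ℝ) (X X' : Set (EuclideanSpace ℝ (Fin N)))
    (s s' : EuclideanSpace ℝ (Fin N) → ℝ) : Prop :=
  (∀ x ∈ X, ∃ y ∈ X', ‖x - y‖ ≤ δ ∧ |s x - s' y| ≤ δ) ∧
  (∀ y ∈ X', ∃ x ∈ X, ‖x - y‖ ≤ δ ∧ |s x - s' y| ≤ δ)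

/-
Each component of `D_v` differs from the corresponding component of `D_{v'}` only by points whose
`s`-value lies between the two thresholds involved. Those points belong to the interval level sets in
the bound, which sit inside both components being compared, so the Hausdorff distance of the
components is controlled by that of the interval level sets.
-/

theorem hausdorffEDist_le_of_subset_union {α : Type*} [PseudoEMetricSpace α] {A B S T : Set α}
    (hA : A ⊆ B ∪ S) (hB : B ⊆ A ∪ T) (hS : S ⊆ A) (hT : T ⊆ B) :
    hausdorffEDist A B ≤ hausdorffEDist S T := by
  refine hausdorffEDist_le_of_infEDist (fun x hx => ?_) (fun y hy => ?_)
  · rcases hA hx with hxB | hxS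
    · simp [infEDist_zero_of_mem hxB]
    · exact (infEDist_anti hT).trans (infEDist_le_hausdorffEDist_of_mem hxS)
  · rcases hB hy with hyA | hyT
    · simp [infEDist_zero_of_mem hyA]
    · calc infEDist y A ≤ infEDist y S := infEDist_anti hS
        _ ≤ hausdorffEDist T S := infEDist_le_hausdorffEDist_of_mem hyT
        _ = hausdorffEDist S T := hausdorffEDist_comm

section LevelSets

variable (X : Set (EuclideanSpace ℝ (Fin N))) (s : EuclideanSpace ℝ (Fin N) → ℝ)

theorem ival_subset_sub (a b : ℝ) : ival X s a b ⊆ sub X s b :=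
  fun _ hx => ⟨hx.1, hx.2.2⟩

theorem ival_subset_supl (a b : ℝ) : ival X s a b ⊆ supl X s a :=
  fun _ hx => ⟨hx.1, hx.2.1⟩

theorem sub_subset_sub_union_ival {a b' : ℝ} (hab' : a ≤ b') (b : ℝ) :
    sub X s b ⊆ sub X s b' ∪ ival X s a b := by
  intro x hx
  by_cases h : s x ≤ b'
  · exact Or.inl ⟨hx.1, h⟩
  · exact Or.inr ⟨hx.1, by linarith [not_le.mp h], hx.2⟩

theorem supl_subset_supl_union_ival {a' b : ℝ} (ha'b : a' ≤ b) (a : ℝ) :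
    supl X s a ⊆ supl X s a' ∪ ival X s a b := by
  intro x hx
  by_cases h : a' ≤ s x
  · exact Or.inl ⟨hx.1, h⟩
  · exact Or.inr ⟨hx.1, hx.2, by linarith [not_le.mp h]⟩

theorem hausdorffEDist_sub_le {a b b' : ℝ} (hab : a ≤ b) (hab' : a ≤ b') :
    hausdorffEDist (sub X s b) (sub X s b') ≤
      hausdorffEDist (ival X s a b) (ival X s a b') :=
  hausdorffEDist_le_of_subset_union (sub_subset_sub_union_ival X s hab' b)
    (sub_subset_sub_union_ival X s hab b') (ival_subset_sub X s a b) (ival_subset_sub X s a b')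

theorem hausdorffEDist_supl_le {a a' b : ℝ} (hab : a ≤ b) (ha'b : a' ≤ b) :
    hausdorffEDist (supl X s a) (supl X s a') ≤
      hausdorffEDist (ival X s a b) (ival X s a' b) :=
  hausdorffEDist_le_of_subset_union (supl_subset_supl_union_ival X s ha'b a)
    (supl_subset_supl_union_ival X s hab a') (ival_subset_supl X s a b) (ival_subset_supl X s a' b)

end LevelSets

theorem diagram_distance_le_link_distances_general {N : ℕ}
    (X : Set (EuclideanSpace ℝ (Fin N))) (s : EuclideanSpace ℝ (Fin N) → ℝ)
    (v₁ v₂ v₁' v₂' : ℝ) (hv : (v₁, v₂) ∈ Omega) (hv' : (v₁', v₂') ∈ Omega) :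
    diagDist (Dv X s (v₁, v₂)) (Dv X s (v₁', v₂')) ≤
      max (EMetric.hausdorffEdist (ival X s v₁ v₂) (ival X s v₁' v₂'))
        (max (EMetric.hausdorffEdist (ival X s (min v₁ v₁') v₂) (ival X s (min v₁ v₁') v₂'))
             (EMetric.hausdorffEdist (ival X s v₁ (max v₂ v₂')) (ival X s v₁' (max v₂ v₂')))) := by
  have hv₁₂ : v₁ ≤ v₂ := hv.2.1.le
  have hv₁₂' : v₁' ≤ v₂' := hv'.2.1.le
  refine max_le (le_max_of_le_right (le_max_of_le_left ?_))
    (max_le (le_max_left _ _) (le_max_of_le_right (le_max_of_le_right ?_)))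
  · exact hausdorffEDist_sub_le X s ((min_le_left _ _).trans hv₁₂) ((min_le_right _ _).trans hv₁₂')
  · exact hausdorffEDist_supl_le X s (hv₁₂.trans (le_max_left _ _))
      (hv₁₂'.trans (le_max_right _ _))

/-- The distance between the stratification diagrams `D_v(X,s)` and `D_{v'}(X,s)` is
bounded by the maximum of the Hausdorff distances of the corresponding link parts. -/
theorem diagram_distance_le_link_distances {N : ℕ}
    (X : Set (EuclideanSpace ℝ (Fin N))) (s : EuclideanSpace ℝ (Fin N) → ℝ)
    (hs : ∀ x ∈ X, s x ∈ Set.Icc (0 : ℝ) 1)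
    (v₁ v₂ v₁' v₂' : ℝ) (hv : (v₁, v₂) ∈ Omega) (hv' : (v₁', v₂') ∈ Omega) :
    diagDist (Dv X s (v₁, v₂)) (Dv X s (v₁', v₂')) ≤
      max (EMetric.hausdorffEdist (ival X s v₁ v₂) (ival X s v₁' v₂'))
        (max (EMetric.hausdorffEdist (ival X s (min v₁ v₁') v₂) (ival X s (min v₁ v₁') v₂'))
             (EMetric.hausdorffEdist (ival X s v₁ (max v₂ v₂')) (ival X s v₁' (max v₂ v₂')))) :=
  diagram_distance_le_link_distances_general X s v₁ v₂ v₁' v₂' hv hv'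

end Stmt7
end

section
/- Let (X,s) be a strongly stratified sample of ℝ^N with X compact, s continuous, and possessing cylinder structure. Then: (i) the map u ↦ X_{≤u} is continuous from (0,1) to the subsets of ℝ^N with the Hausdorff distance, i.e., for every u ∈ (0,1), d_H(X_{≤u'}, X_{≤u}) → 0 as u' → u in (0,1); and (ii) the map v ↦ D_v(X,s) is continuous from Ω (with the max-metric) to triples of subsets with the maximum of the componentwise Hausdorff distances, i.e., for every v⁰ ∈ Ω, all three componentwise Hausdorff distances between D_v(X,s) and D_{v⁰}(X,s) tend to 0 as v → v⁰ in Ω. -/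
open Metric Set
open scoped ENNReal

namespace Stmt9

variable {N : ℕ}

/-- Sublevel set `X_{≤ b}`. -/
def sub (X : Set (EuclideanSpace ℝ (Fin N))) (s : EuclideanSpace ℝ (Fin N) → ℝ) (b : ℝ) :
    Set (EuclideanSpace ℝ (Fin N)) := {x | x ∈ X ∧ s x ≤ b}

/-- Superlevel set `X_{≥ a}`. -/
def supl (X : Set (EuclideanSpace ℝ (Fin N))) (s : EuclideanSpace ℝ (Fin N) → ℝ) (a : ℝ) :
    Set (EuclideanSpace ℝ (Fin N)) := {x | x ∈ X ∧ a ≤ s x}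

/-- Interval level set `X^a_b`. -/
def ival (X : Set (EuclideanSpace ℝ (Fin N))) (s : EuclideanSpace ℝ (Fin N) → ℝ) (a b : ℝ) :
    Set (EuclideanSpace ℝ (Fin N)) := {x | x ∈ X ∧ a ≤ s x ∧ s x ≤ b}

/-- The parameter space `Ω = {(v₁,v₂) : 0 < v₁ < v₂ < 1}`. -/
def Omega : Set (ℝ × ℝ) := {p | 0 < p.1 ∧ p.1 < p.2 ∧ p.2 < 1}

/-- The stratification diagram `D_v(X,s) = (X_{≤v₂}, X^{v₁}_{v₂}, X_{≥v₁})`. -/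
def Dv (X : Set (EuclideanSpace ℝ (Fin N))) (s : EuclideanSpace ℝ (Fin N) → ℝ) (v : ℝ × ℝ) :
    Set (EuclideanSpace ℝ (Fin N)) × Set (EuclideanSpace ℝ (Fin N)) ×
      Set (EuclideanSpace ℝ (Fin N)) :=
  (sub X s v.2, ival X s v.1 v.2, supl X s v.1)

/-- Maximum of the three componentwise Hausdorff distances between two diagram triples. -/
noncomputable def diagDist
    (D D' : Set (EuclideanSpace ℝ (Fin N)) × Set (EuclideanSpace ℝ (Fin N)) ×
      Set (EuclideanSpace ℝ (Fin N))) : ℝ≥0∞ :=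
  max (EMetric.hausdorffEdist D.1 D'.1)
    (max (EMetric.hausdorffEdist D.2.1 D'.2.1) (EMetric.hausdorffEdist D.2.2 D'.2.2))

/-- Two strongly stratified samples are `δ`-close. -/
def StronglyClose (δ : ℝ) (X X' : Set (EuclideanSpace ℝ (Fin N)))
    (s s' : EuclideanSpace ℝ (Fin N) → ℝ) : Prop :=
  (∀ x ∈ X, ∃ y ∈ X', ‖x - y‖ ≤ δ ∧ |s x - s' y| ≤ δ) ∧
  (∀ y ∈ X', ∃ x ∈ X, ‖x - y‖ ≤ δ ∧ |s x - s' y| ≤ δ)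

/-- A strongly stratified sample `(X,s)` has cylinder structure if, with
`L := s⁻¹({1/2})`, there is a homeomorphism `f : s⁻¹((0,1)) ≃ₜ L × (0,1)` over `(0,1)`. -/
def HasCylinderStructure (X : Set (EuclideanSpace ℝ (Fin N)))
    (s : EuclideanSpace ℝ (Fin N) → ℝ) : Prop :=
  ∃ f : {x : EuclideanSpace ℝ (Fin N) // x ∈ X ∧ s x ∈ Set.Ioo (0 : ℝ) 1} ≃ₜ
      ({x : EuclideanSpace ℝ (Fin N) // x ∈ X ∧ s x = 1 / 2} × Set.Ioo (0 : ℝ) 1),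
    ∀ x, ((f x).2 : ℝ) = s x.1

private lemma move {N : ℕ} (X : Set (EuclideanSpace ℝ (Fin N))) (s : EuclideanSpace ℝ (Fin N) → ℝ)
    (hX : IsCompact X) (hcont : ContinuousOn s X) (hcyl : HasCylinderStructure X s)
    (a b : ℝ) (ha : 0 < a) (hb : b < 1) (ε : ℝ) (hε : 0 < ε) :
    ∃ δ > 0, ∀ x ∈ X, ∀ c, s x ∈ Set.Icc a b → c ∈ Set.Icc a b → |s x - c| ≤ δ →
      ∃ y ∈ X, s y = c ∧ dist x y ≤ ε := by
  obtain ⟨f, hf⟩ := hcyl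
  haveI hXc : CompactSpace X := isCompact_iff_compactSpace.mp hX
  have hres : Continuous (X.restrict s) := continuousOn_iff_continuous_restrict.mp hcont
  have hLc : IsCompact {x : EuclideanSpace ℝ (Fin N) | x ∈ X ∧ s x = 1/2} := by
    have hK : IsCompact ((X.restrict s) ⁻¹' {(1:ℝ)/2}) :=
      (isClosed_singleton.preimage hres).isCompact
    have himg : Subtype.val '' ((X.restrict s) ⁻¹' {(1:ℝ)/2})
        = {x : EuclideanSpace ℝ (Fin N) | x ∈ X ∧ s x = 1/2} := by
      ext x
      constructor
      · rintro ⟨⟨y, hy⟩, hmem, rfl⟩; exact ⟨hy, hmem⟩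
      · rintro ⟨hx, hsx⟩; exact ⟨⟨x, hx⟩, hsx, rfl⟩
    exact himg ▸ hK.image continuous_subtype_val
  haveI : CompactSpace {x : EuclideanSpace ℝ (Fin N) // x ∈ X ∧ s x = 1/2} :=
    isCompact_iff_compactSpace.mp hLc
  haveI : CompactSpace (Set.Icc a b) := isCompact_iff_compactSpace.mp isCompact_Icc
  set ι : Set.Icc a b → Set.Ioo (0:ℝ) 1 :=
    fun t => ⟨t.1, ha.trans_le t.2.1, lt_of_le_of_lt t.2.2 hb⟩ with hι_def
  have hι : Continuous ι := Continuous.subtype_mk continuous_subtype_val _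
  set F : ({x : EuclideanSpace ℝ (Fin N) // x ∈ X ∧ s x = 1/2} × Set.Icc a b × Set.Icc a b) → ℝ :=
    fun p => dist (f.symm (p.1, ι p.2.1)) (f.symm (p.1, ι p.2.2)) with hF_def
  have hF : Continuous F := by
    apply Continuous.dist
    · exact f.symm.continuous.comp
        (continuous_fst.prodMk (hι.comp (continuous_fst.comp continuous_snd)))
    · exact f.symm.continuous.comp
        (continuous_fst.prodMk (hι.comp (continuous_snd.comp continuous_snd)))
  have hUF : UniformContinuous F := CompactSpace.uniformContinuous_of_continuous hF
  obtain ⟨δ, hδ, hδ'⟩ := Metric.uniformContinuous_iff.mp hUF ε hε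
  refine ⟨δ/2, by positivity, ?_⟩
  intro x hx c hsx hc hclose
  have hsx01 : s x ∈ Set.Ioo (0:ℝ) 1 := ⟨ha.trans_le hsx.1, lt_of_le_of_lt hsx.2 hb⟩
  set z : {x : EuclideanSpace ℝ (Fin N) // x ∈ X ∧ s x ∈ Set.Ioo (0:ℝ) 1} := ⟨x, hx, hsx01⟩ with hz_def
  set ℓ := (f z).1 with hℓ_def
  set t₁ : Set.Icc a b := ⟨s x, hsx⟩ with ht₁
  set t₂ : Set.Icc a b := ⟨c, hc⟩ with ht₂
  have hpz : (ℓ, ι t₁) = f z := by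
    refine Prod.ext rfl (Subtype.ext ?_)
    simpa using (hf z).symm
  have hz1 : f.symm (ℓ, ι t₁) = z := by rw [hpz, Homeomorph.symm_apply_apply]
  set y := f.symm (ℓ, ι t₂) with hy_def
  have hyX : y.1 ∈ X := y.2.1
  have hsy : s y.1 = c := by
    have h := hf y
    rw [hy_def, Homeomorph.apply_symm_apply] at h
    simpa using h.symm
  refine ⟨y.1, hyX, hsy, ?_⟩
  have h1 : dist x y.1 = F (ℓ, t₁, t₂) := by
    rw [hF_def]
    simp only
    rw [hz1, ← hy_def, Subtype.dist_eq]
  have h0 : F (ℓ, t₁, t₁) = 0 := by simp [hF_def]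
  have hd : dist ((ℓ, t₁, t₂) : _ × _ × _) (ℓ, t₁, t₁) < δ := by
    rw [Prod.dist_eq, Prod.dist_eq]
    have h2 : dist t₂ t₁ < δ := by
      rw [Subtype.dist_eq, Real.dist_eq]
      calc |(c : ℝ) - s x| = |s x - c| := abs_sub_comm _ _
        _ ≤ δ/2 := hclose
        _ < δ := by linarith
    simp only [dist_self]
    exact max_lt hδ (max_lt hδ h2)
  have h3 := hδ' hd
  rw [Real.dist_eq, h0, sub_zero] at h3
  calc dist x y.1 = F (ℓ, t₁, t₂) := h1
    _ ≤ |F (ℓ, t₁, t₂)| := le_abs_self _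
    _ ≤ ε := h3.le


private lemma key_sub {N : ℕ} {X : Set (EuclideanSpace ℝ (Fin N))}
    {s : EuclideanSpace ℝ (Fin N) → ℝ} {a b δ ε : ℝ}
    (hmove : ∀ x ∈ X, ∀ c, s x ∈ Set.Icc a b → c ∈ Set.Icc a b → |s x - c| ≤ δ →
      ∃ y ∈ X, s y = c ∧ dist x y ≤ ε)
    {u u' : ℝ} (hu : u ∈ Set.Icc a b) (hu' : u' ∈ Set.Icc a b) (hd : |u' - u| ≤ δ) :
    ∀ x ∈ sub X s u', ∃ y ∈ sub X s u, edist x y ≤ ENNReal.ofReal ε := by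
  intro x hxm
  by_cases hle : s x ≤ u
  · exact ⟨x, ⟨hxm.1, hle⟩, by simp⟩
  · push_neg at hle
    have hsx : s x ∈ Set.Icc a b := ⟨le_trans hu.1 hle.le, le_trans hxm.2 hu'.2⟩
    have habs : |s x - u| ≤ δ := by
      rw [abs_of_nonneg (by linarith)]
      have h2 := (abs_le.mp hd).2
      have := hxm.2
      linarith
    obtain ⟨y, hy, hsy, hdy⟩ := hmove x hxm.1 u hsx hu habs
    exact ⟨y, ⟨hy, hsy.le⟩, by rw [edist_dist]; exact ENNReal.ofReal_le_ofReal hdy⟩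

private lemma key_supl {N : ℕ} {X : Set (EuclideanSpace ℝ (Fin N))}
    {s : EuclideanSpace ℝ (Fin N) → ℝ} {a b δ ε : ℝ}
    (hmove : ∀ x ∈ X, ∀ c, s x ∈ Set.Icc a b → c ∈ Set.Icc a b → |s x - c| ≤ δ →
      ∃ y ∈ X, s y = c ∧ dist x y ≤ ε)
    {u u' : ℝ} (hu : u ∈ Set.Icc a b) (hu' : u' ∈ Set.Icc a b) (hd : |u' - u| ≤ δ) :
    ∀ x ∈ supl X s u', ∃ y ∈ supl X s u, edist x y ≤ ENNReal.ofReal ε := by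
  intro x hxm
  by_cases hle : u ≤ s x
  · exact ⟨x, ⟨hxm.1, hle⟩, by simp⟩
  · push_neg at hle
    have hsx : s x ∈ Set.Icc a b := ⟨le_trans hu'.1 hxm.2, le_trans hle.le hu.2⟩
    have habs : |s x - u| ≤ δ := by
      rw [abs_of_nonpos (by linarith), neg_sub]
      have h1 := (abs_le.mp hd).1
      have := hxm.2
      linarith
    obtain ⟨y, hy, hsy, hdy⟩ := hmove x hxm.1 u hsx hu habs
    exact ⟨y, ⟨hy, hsy.ge⟩, by rw [edist_dist]; exact ENNReal.ofReal_le_ofReal hdy⟩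

private lemma key_ival {N : ℕ} {X : Set (EuclideanSpace ℝ (Fin N))}
    {s : EuclideanSpace ℝ (Fin N) → ℝ} {a b δ ε : ℝ}
    (hmove : ∀ x ∈ X, ∀ c, s x ∈ Set.Icc a b → c ∈ Set.Icc a b → |s x - c| ≤ δ →
      ∃ y ∈ X, s y = c ∧ dist x y ≤ ε)
    {a₁ b₁ a₂ b₂ : ℝ} (ha₁ : a₁ ∈ Set.Icc a b) (hb₁ : b₁ ∈ Set.Icc a b)
    (ha₂ : a₂ ∈ Set.Icc a b) (hb₂ : b₂ ∈ Set.Icc a b) (hab₂ : a₂ ≤ b₂)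
    (hda : |a₁ - a₂| ≤ δ) (hdb : |b₁ - b₂| ≤ δ) :
    ∀ x ∈ ival X s a₁ b₁, ∃ y ∈ ival X s a₂ b₂, edist x y ≤ ENNReal.ofReal ε := by
  intro x hxm
  obtain ⟨hxX, hxa, hxb⟩ := hxm
  rcases lt_or_ge (s x) a₂ with hlt | hge
  · have hsx : s x ∈ Set.Icc a b := ⟨le_trans ha₁.1 hxa, le_trans hlt.le ha₂.2⟩
    have habs : |s x - a₂| ≤ δ := by
      rw [abs_of_nonpos (by linarith), neg_sub]
      have h1 := (abs_le.mp hda).1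
      linarith
    obtain ⟨y, hy, hsy, hdy⟩ := hmove x hxX a₂ hsx ha₂ habs
    exact ⟨y, ⟨hy, hsy.ge, by rw [hsy]; exact hab₂⟩,
      by rw [edist_dist]; exact ENNReal.ofReal_le_ofReal hdy⟩
  · rcases le_or_gt (s x) b₂ with hle2 | hgt
    · exact ⟨x, ⟨hxX, hge, hle2⟩, by simp⟩
    · have hsx : s x ∈ Set.Icc a b := ⟨le_trans ha₂.1 (le_trans hab₂ hgt.le), le_trans hxb hb₁.2⟩
      have habs : |s x - b₂| ≤ δ := by
        rw [abs_of_nonneg (by linarith)]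
        have h1 := (abs_le.mp hdb).2
        linarith
      obtain ⟨y, hy, hsy, hdy⟩ := hmove x hxX b₂ hsx hb₂ habs
      exact ⟨y, ⟨hy, by rw [hsy]; exact hab₂, hsy.le⟩,
        by rw [edist_dist]; exact ENNReal.ofReal_le_ofReal hdy⟩

/-- For a compact strongly stratified sample with continuous stratification and cylinder
structure, (i) the sublevel sets `X_{≤u}` vary continuously in `u ∈ (0,1)` in Hausdorff
distance, and (ii) the stratification diagrams `D_v(X,s)` vary continuously in `v ∈ Ω`. -/
theorem sublevel_and_diagram_vary_continuously {N : ℕ}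
    (X : Set (EuclideanSpace ℝ (Fin N))) (s : EuclideanSpace ℝ (Fin N) → ℝ)
    (hX : IsCompact X) (hs : ∀ x ∈ X, s x ∈ Set.Icc (0 : ℝ) 1)
    (hcont : ContinuousOn s X)
    (hcyl : HasCylinderStructure X s) :
    (∀ u ∈ Set.Ioo (0 : ℝ) 1,
      Filter.Tendsto (fun u' : ℝ => EMetric.hausdorffEdist (sub X s u') (sub X s u))
        (nhdsWithin u (Set.Ioo (0 : ℝ) 1)) (nhds 0)) ∧
    (∀ v0 ∈ Omega,
      Filter.Tendsto (fun v : ℝ × ℝ => diagDist (Dv X s v) (Dv X s v0))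
        (nhdsWithin v0 Omega) (nhds 0)) := by
  constructor
  · -- part (i)
    intro u hu
    rw [ENNReal.tendsto_nhds_zero]
    intro ε hε
    -- extract a real ε'
    have hne : min 1 ε ≠ ∞ := ne_top_of_le_ne_top ENNReal.one_ne_top (min_le_left _ _)
    set ε' : ℝ := (min 1 ε).toReal with hε'def
    have hε' : 0 < ε' := ENNReal.toReal_pos (lt_min zero_lt_one hε).ne' hne
    have hofle : ENNReal.ofReal ε' ≤ ε := by
      rw [hε'def, ENNReal.ofReal_toReal hne]; exact min_le_right _ _
    set a : ℝ := u / 2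
    set b : ℝ := (u + 1) / 2
    have ha : 0 < a := by simp only [a]; linarith [hu.1]
    have hb : b < 1 := by simp only [b]; linarith [hu.2]
    obtain ⟨δ, hδ, hmove⟩ := move X s hX hcont hcyl a b ha hb ε' hε'
    have huab : u ∈ Set.Icc a b := ⟨by simp only [a]; linarith [hu.1], by simp only [b]; linarith [hu.2]⟩
    set r : ℝ := min δ (min (u - a) (b - u)) with hrdef
    have hr : 0 < r := lt_min hδ (lt_min (by simp only [a]; linarith [hu.1])
      (by simp only [b]; linarith [hu.2]))
    filter_upwards [nhdsWithin_le_nhds (Metric.ball_mem_nhds u hr)] with u' hu'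
    have hd : |u' - u| < r := by rwa [Metric.mem_ball, Real.dist_eq] at hu'
    have hd1 : |u' - u| ≤ δ := le_trans hd.le (min_le_left _ _)
    have hd2 : |u' - u| < min (u - a) (b - u) := lt_of_lt_of_le hd (min_le_right _ _)
    have habsa := abs_lt.mp (lt_of_lt_of_le hd2 (min_le_left _ _))
    have habsb := abs_lt.mp (lt_of_lt_of_le hd2 (min_le_right _ _))
    have hu'ab : u' ∈ Set.Icc a b := ⟨by linarith [habsa.1], by linarith [habsb.2]⟩
    refine le_trans ?_ hofle
    exact EMetric.hausdorffEdist_le_of_mem_edist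
      (key_sub hmove huab hu'ab hd1)
      (key_sub hmove hu'ab huab (by rwa [abs_sub_comm]))
  · -- part (ii)
    intro v0 hv0
    obtain ⟨h01, h12, h21⟩ := hv0
    rw [ENNReal.tendsto_nhds_zero]
    intro ε hε
    have hne : min 1 ε ≠ ∞ := ne_top_of_le_ne_top ENNReal.one_ne_top (min_le_left _ _)
    set ε' : ℝ := (min 1 ε).toReal with hε'def
    have hε' : 0 < ε' := ENNReal.toReal_pos (lt_min zero_lt_one hε).ne' hne
    have hofle : ENNReal.ofReal ε' ≤ ε := by
      rw [hε'def, ENNReal.ofReal_toReal hne]; exact min_le_right _ _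
    set a : ℝ := v0.1 / 2
    set b : ℝ := (v0.2 + 1) / 2
    have ha : 0 < a := by simp only [a]; linarith
    have hb : b < 1 := by simp only [b]; linarith
    obtain ⟨δ, hδ, hmove⟩ := move X s hX hcont hcyl a b ha hb ε' hε'
    have hv01 : v0.1 ∈ Set.Icc a b := ⟨by simp only [a]; linarith, by simp only [b]; linarith⟩
    have hv02 : v0.2 ∈ Set.Icc a b := ⟨by simp only [a]; linarith, by simp only [b]; linarith⟩
    set r : ℝ := min δ (min (v0.1 - a) (b - v0.2)) with hrdef
    have hr : 0 < r := lt_min hδ (lt_min (by simp only [a]; linarith)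
      (by simp only [b]; linarith))
    filter_upwards [nhdsWithin_le_nhds (Metric.ball_mem_nhds v0 hr), self_mem_nhdsWithin]
      with v hv hvΩ
    obtain ⟨hΩ1, hΩ2, hΩ3⟩ := hvΩ
    rw [Metric.mem_ball, Prod.dist_eq] at hv
    have hv1 : |v.1 - v0.1| < r := lt_of_le_of_lt (le_trans (le_of_eq (Real.dist_eq _ _).symm)
      (le_max_left _ _)) hv
    have hv2 : |v.2 - v0.2| < r := lt_of_le_of_lt (le_trans (le_of_eq (Real.dist_eq _ _).symm)
      (le_max_right _ _)) hv
    have hrδ : r ≤ δ := min_le_left _ _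
    have hra : r ≤ v0.1 - a := le_trans (min_le_right _ _) (min_le_left _ _)
    have hrb : r ≤ b - v0.2 := le_trans (min_le_right _ _) (min_le_right _ _)
    have habs1 := abs_lt.mp hv1
    have habs2 := abs_lt.mp hv2
    have hvb : v.2 ≤ b := by linarith [habs2.2]
    have hva : a ≤ v.1 := by linarith [habs1.1]
    have hv1ab : v.1 ∈ Set.Icc a b := ⟨hva, le_trans hΩ2.le hvb⟩
    have hv2ab : v.2 ∈ Set.Icc a b := ⟨le_trans hva hΩ2.le, hvb⟩
    have hd1 : |v.1 - v0.1| ≤ δ := le_trans hv1.le hrδ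
    have hd2 : |v.2 - v0.2| ≤ δ := le_trans hv2.le hrδ
    refine le_trans ?_ hofle
    simp only [diagDist, Dv]
    refine max_le ?_ (max_le ?_ ?_)
    · exact EMetric.hausdorffEdist_le_of_mem_edist
        (key_sub hmove hv02 hv2ab hd2)
        (key_sub hmove hv2ab hv02 (by rwa [abs_sub_comm]))
    · exact EMetric.hausdorffEdist_le_of_mem_edist
        (key_ival hmove hv1ab hv2ab hv01 hv02 h12.le
          hd1 hd2)
        (key_ival hmove hv01 hv02 hv1ab hv2ab hΩ2.le
          (by rwa [abs_sub_comm]) (by rwa [abs_sub_comm]))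
    · exact EMetric.hausdorffEdist_le_of_mem_edist
        (key_supl hmove hv01 hv1ab hd1)
        (key_supl hmove hv1ab hv01 (by rwa [abs_sub_comm]))

end Stmt9
end

section
/- Let (X,s) be a strongly stratified sample of ℝ^N. (i) Fix u ∈ (0,1), K ≥ 0 and ρ > 0 with (u−ρ, u+ρ) ⊆ (0,1), and suppose d_H(X_{≤a}, X_{≤b}) ≤ K·|a−b| for all a,b ∈ (u−ρ, u+ρ). Then there is δ₀ > 0 such that whenever 0 < δ ≤ δ₀ and (X',s') is a strongly stratified sample δ-close to (X,s), one has max(d_H(X,X'), d_H(X_{≤u}, X'_{≤u})) ≤ (K+1)δ. (ii) Fix v = (v₁,v₂) ∈ Ω, K ≥ 0 and ρ > 0, and suppose d_H(X^a_b, X^{a'}_{b'}) ≤ K·max(|a−a'|, |b−b'|) for all a,a' ∈ (v₁−ρ, v₁+ρ) and b,b' ∈ (v₂−ρ, v₂+ρ) with a ≤ b and a' ≤ b'. Then there is δ₀ > 0 such that whenever 0 < δ ≤ δ₀ and (X',s') is δ-close to (X,s), each of the three componentwise Hausdorff distances between D_v(X,s) and D_v(X',s') is at most (K+1)δ. (That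 is, F_u and D_v are (K+1)-Lipschitz at (X,s) under the respective local Lipschitz hypotheses on the level sets.) -/
/-!
Closeness moves every point by at most `δ`, both in space and in stratification value. Hence each
point of `X^{[a+δ, b-δ]}` lies within `δ` of `X'^{[a,b]}`, and each point of `X'^{[a,b]}` lies
within `δ` of `X^{[a-δ, b+δ]}`. The Lipschitz hypothesis brings these shrunk and grown level sets
of `X` back to `X^{[a,b]}` at cost `Kδ`, and the triangle inequality gives `(K+1)δ`. The
half-infinite level sets `X_{≤b}` and `X_{≥a}` inherit the Lipschitz bound from the interval ones,
because near `v` they differ from `X^{v₁}_b` and `X^a_{v₂}` only by the fixed sets `X_{≤v₁}` and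
`X_{≥v₂}`.
-/

open Metric Set
open scoped ENNReal

namespace Stmt11

variable {N : ℕ}

/-- Sublevel set `X_{≤ b}`. -/
def sub (X : Set (EuclideanSpace ℝ (Fin N))) (s : EuclideanSpace ℝ (Fin N) → ℝ) (b : ℝ) :
    Set (EuclideanSpace ℝ (Fin N)) := {x | x ∈ X ∧ s x ≤ b}

/-- Superlevel set `X_{≥ a}`. -/
def supl (X : Set (EuclideanSpace ℝ (Fin N))) (s : EuclideanSpace ℝ (Fin N) → ℝ) (a : ℝ) :
    Set (EuclideanSpace ℝ (Fin N)) := {x | x ∈ X ∧ a ≤ s x}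

/-- Interval level set `X^a_b`. -/
def ival (X : Set (EuclideanSpace ℝ (Fin N))) (s : EuclideanSpace ℝ (Fin N) → ℝ) (a b : ℝ) :
    Set (EuclideanSpace ℝ (Fin N)) := {x | x ∈ X ∧ a ≤ s x ∧ s x ≤ b}

/-- The parameter space `Ω = {(v₁,v₂) : 0 < v₁ < v₂ < 1}`. -/
def Omega : Set (ℝ × ℝ) := {p | 0 < p.1 ∧ p.1 < p.2 ∧ p.2 < 1}

/-- The stratification diagram `D_v(X,s) = (X_{≤v₂}, X^{v₁}_{v₂}, X_{≥v₁})`. -/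
def Dv (X : Set (EuclideanSpace ℝ (Fin N))) (s : EuclideanSpace ℝ (Fin N) → ℝ) (v : ℝ × ℝ) :
    Set (EuclideanSpace ℝ (Fin N)) × Set (EuclideanSpace ℝ (Fin N)) ×
      Set (EuclideanSpace ℝ (Fin N)) :=
  (sub X s v.2, ival X s v.1 v.2, supl X s v.1)

/-- Maximum of the three componentwise Hausdorff distances between two diagram triples. -/
noncomputable def diagDist
    (D D' : Set (EuclideanSpace ℝ (Fin N)) × Set (EuclideanSpace ℝ (Fin N)) ×
      Set (EuclideanSpace ℝ (Fin N))) : ℝ≥0∞ :=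
  max (EMetric.hausdorffEdist D.1 D'.1)
    (max (EMetric.hausdorffEdist D.2.1 D'.2.1) (EMetric.hausdorffEdist D.2.2 D'.2.2))

/-- Two strongly stratified samples are `δ`-close. -/
def StronglyClose (δ : ℝ) (X X' : Set (EuclideanSpace ℝ (Fin N)))
    (s s' : EuclideanSpace ℝ (Fin N) → ℝ) : Prop :=
  (∀ x ∈ X, ∃ y ∈ X', ‖x - y‖ ≤ δ ∧ |s x - s' y| ≤ δ) ∧
  (∀ y ∈ X', ∃ x ∈ X, ‖x - y‖ ≤ δ ∧ |s x - s' y| ≤ δ)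

section HausdorffSandwich

variable {α : Type*} [PseudoEMetricSpace α]

theorem infEDist_le_add_of_forall_infEDist_le {x : α} {B T : Set α} {r d : ℝ≥0∞}
    (hx : infEDist x B ≤ r) (hB : ∀ z ∈ B, infEDist z T ≤ d) : infEDist x T ≤ r + d := by
  calc infEDist x T ≤ ⨅ z ∈ B, (edist x z + d) :=
        le_iInf₂ fun z hz => infEDist_le_edist_add_infEDist.trans (add_le_add_right (hB z hz) _)
    _ = infEDist x B + d := by simp only [infEDist, ENNReal.iInf_add]
    _ ≤ r + d := add_le_add_left hx d

theorem hausdorffEDist_le_of_sandwich {A A' inner outer : Set α} {r d : ℝ≥0∞}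
    (hA : ∀ x ∈ A, infEDist x inner ≤ r) (hinner : ∀ x ∈ inner, infEDist x A' ≤ d)
    (hA' : ∀ y ∈ A', infEDist y outer ≤ d) (houter : ∀ x ∈ outer, infEDist x A ≤ r) :
    hausdorffEDist A A' ≤ r + d :=
  hausdorffEDist_le_of_infEDist
    (fun x hx => infEDist_le_add_of_forall_infEDist_le (hA x hx) hinner)
    fun y hy => add_comm d r ▸ infEDist_le_add_of_forall_infEDist_le (hA' y hy) houter

theorem hausdorffEDist_union_left_le (C A B : Set α) :
    hausdorffEDist (C ∪ A) (C ∪ B) ≤ hausdorffEDist A B :=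
  hausdorffEDist_union_le.trans (max_le (hausdorffEDist_self.trans_le zero_le) le_rfl)

end HausdorffSandwich

theorem mem_Ioo_of_abs_sub_le {c b δ ρ : ℝ} (h : |c - b| ≤ δ) (hδρ : δ < ρ) :
    b ∈ Ioo (c - ρ) (c + ρ) := by
  rw [← Real.ball_eq_Ioo]
  exact mem_ball'.2 (h.trans_lt hδρ)

theorem ofReal_mul_add_ofReal {K δ : ℝ} (hK : 0 ≤ K) (hδ : 0 ≤ δ) :
    ENNReal.ofReal (K * δ) + ENNReal.ofReal δ = ENNReal.ofReal ((K + 1) * δ) := by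
  rw [← ENNReal.ofReal_add (mul_nonneg hK hδ) hδ, add_one_mul]

theorem abs_self_sub_sub_le {δ : ℝ} (hδ : 0 ≤ δ) (v : ℝ) : |v - (v - δ)| ≤ δ := by
  rw [sub_sub_cancel, abs_of_nonneg hδ]

theorem abs_self_sub_add_le {δ : ℝ} (hδ : 0 ≤ δ) (v : ℝ) : |v - (v + δ)| ≤ δ := by
  rw [sub_add_cancel_left, abs_neg, abs_of_nonneg hδ]

section LevelSets

variable {X X' : Set (EuclideanSpace ℝ (Fin N))} {s s' : EuclideanSpace ℝ (Fin N) → ℝ}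
  {δ a b : ℝ}

/-- `sub`, `ival` and `supl` are definitionally `levelSet` of `Iic b`, `Icc a b` and `Ici a`. -/
def levelSet (X : Set (EuclideanSpace ℝ (Fin N))) (s : EuclideanSpace ℝ (Fin N) → ℝ)
    (S : Set ℝ) : Set (EuclideanSpace ℝ (Fin N)) :=
  {x | x ∈ X ∧ s x ∈ S}

theorem sub_eq_sub_union_ival (hab : a ≤ b) : sub X s b = sub X s a ∪ ival X s a b := by
  ext x
  simp only [sub, ival, mem_union, mem_setOf_eq]
  constructor
  · rintro ⟨hx, hxb⟩
    exact (le_or_gt (s x) a).imp (fun hxa => ⟨hx, hxa⟩) fun hxa => ⟨hx, hxa.le, hxb⟩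
  · rintro (⟨hx, hxa⟩ | ⟨hx, -, hxb⟩)
    exacts [⟨hx, hxa.trans hab⟩, ⟨hx, hxb⟩]

theorem supl_eq_supl_union_ival (hab : a ≤ b) : supl X s a = supl X s b ∪ ival X s a b := by
  ext x
  simp only [supl, ival, mem_union, mem_setOf_eq]
  constructor
  · rintro ⟨hx, hax⟩
    exact (le_or_gt b (s x)).imp (fun hbx => ⟨hx, hbx⟩) fun hbx => ⟨hx, hax, hbx.le⟩
  · rintro (⟨hx, hbx⟩ | ⟨hx, hax, -⟩)
    exacts [⟨hx, hab.trans hbx⟩, ⟨hx, hax⟩]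

theorem hausdorffEDist_sub_le_ival {b' : ℝ} (hab : a ≤ b) (hab' : a ≤ b') :
    hausdorffEDist (sub X s b) (sub X s b') ≤ hausdorffEDist (ival X s a b) (ival X s a b') := by
  rw [sub_eq_sub_union_ival hab, sub_eq_sub_union_ival hab']
  exact hausdorffEDist_union_left_le _ _ _

theorem hausdorffEDist_supl_le_ival {a' : ℝ} (hab : a ≤ b) (ha'b : a' ≤ b) :
    hausdorffEDist (supl X s a) (supl X s a') ≤ hausdorffEDist (ival X s a b) (ival X s a' b) := by
  rw [supl_eq_supl_union_ival hab, supl_eq_supl_union_ival ha'b]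
  exact hausdorffEDist_union_left_le _ _ _

theorem StronglyClose.symm (h : StronglyClose δ X X' s s') : StronglyClose δ X' X s' s :=
  ⟨fun y hy => let ⟨x, hx, hxy, hsxy⟩ := h.2 y hy
    ⟨x, hx, by rwa [norm_sub_rev], by rwa [abs_sub_comm]⟩,
   fun x hx => let ⟨y, hy, hxy, hsxy⟩ := h.1 x hx
    ⟨y, hy, by rwa [norm_sub_rev], by rwa [abs_sub_comm]⟩⟩

theorem StronglyClose.exists_edist_le (h : StronglyClose δ X X' s s') {x} (hx : x ∈ X) :
    ∃ y ∈ X', edist x y ≤ ENNReal.ofReal δ ∧ |s x - s' y| ≤ δ := by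
  obtain ⟨y, hy, hxy, hsxy⟩ := h.1 x hx
  exact ⟨y, hy, by rw [edist_dist, dist_eq_norm]; exact ENNReal.ofReal_le_ofReal hxy, hsxy⟩

theorem StronglyClose.hausdorffEDist_le (h : StronglyClose δ X X' s s') :
    hausdorffEDist X X' ≤ ENNReal.ofReal δ :=
  hausdorffEDist_le_of_mem_edist
    (fun _ hx => let ⟨y, hy, hxy, _⟩ := h.exists_edist_le hx; ⟨y, hy, hxy⟩)
    (fun _ hy => let ⟨x, hx, hxy, _⟩ := h.symm.exists_edist_le hy; ⟨x, hx, hxy⟩)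

theorem StronglyClose.infEDist_levelSet_le (h : StronglyClose δ X X' s s') {S S' : Set ℝ}
    (hSS' : ∀ t ∈ S, ∀ t', |t - t'| ≤ δ → t' ∈ S') {x} (hx : x ∈ levelSet X s S) :
    infEDist x (levelSet X' s' S') ≤ ENNReal.ofReal δ := by
  obtain ⟨y, hy, hxy, hsxy⟩ := h.exists_edist_le hx.1
  have hy' : y ∈ levelSet X' s' S' := ⟨hy, hSS' _ hx.2 _ hsxy⟩
  exact (infEDist_le_edist_of_mem hy').trans hxy

theorem StronglyClose.hausdorffEDist_levelSet_le (h : StronglyClose δ X X' s s')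
    {S Sin Sout : Set ℝ} {r : ℝ≥0∞}
    (hSin : ∀ t ∈ Sin, ∀ t', |t - t'| ≤ δ → t' ∈ S)
    (hSout : ∀ t ∈ S, ∀ t', |t - t'| ≤ δ → t' ∈ Sout)
    (hin : hausdorffEDist (levelSet X s S) (levelSet X s Sin) ≤ r)
    (hout : hausdorffEDist (levelSet X s S) (levelSet X s Sout) ≤ r) :
    hausdorffEDist (levelSet X s S) (levelSet X' s' S) ≤ r + ENNReal.ofReal δ :=
  hausdorffEDist_le_of_sandwich (fun _ hx => (infEDist_le_hausdorffEDist_of_mem hx).trans hin)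
    (fun _ => h.infEDist_levelSet_le hSin) (fun _ => h.symm.infEDist_levelSet_le hSout)
    fun _ hx => (infEDist_le_hausdorffEDist_of_mem hx).trans (hausdorffEDist_comm.trans_le hout)

theorem StronglyClose.hausdorffEDist_sub_le (h : StronglyClose δ X X' s s') (hδ : 0 ≤ δ)
    {r : ℝ≥0∞} (hLip : ∀ b', |b - b'| ≤ δ → hausdorffEDist (sub X s b) (sub X s b') ≤ r) :
    hausdorffEDist (sub X s b) (sub X' s' b) ≤ r + ENNReal.ofReal δ :=
  h.hausdorffEDist_levelSet_le (S := Iic b) (Sin := Iic (b - δ)) (Sout := Iic (b + δ))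
    (fun _ ht _ htt' => mem_Iic.2 (by linarith [mem_Iic.1 ht, (abs_le.1 htt').1]))
    (fun _ ht _ htt' => mem_Iic.2 (by linarith [mem_Iic.1 ht, (abs_le.1 htt').1]))
    (hLip _ (abs_self_sub_sub_le hδ b)) (hLip _ (abs_self_sub_add_le hδ b))

theorem StronglyClose.hausdorffEDist_supl_le (h : StronglyClose δ X X' s s') (hδ : 0 ≤ δ)
    {r : ℝ≥0∞} (hLip : ∀ a', |a - a'| ≤ δ → hausdorffEDist (supl X s a) (supl X s a') ≤ r) :
    hausdorffEDist (supl X s a) (supl X' s' a) ≤ r + ENNReal.ofReal δ :=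
  h.hausdorffEDist_levelSet_le (S := Ici a) (Sin := Ici (a + δ)) (Sout := Ici (a - δ))
    (fun _ ht _ htt' => mem_Ici.2 (by linarith [mem_Ici.1 ht, (abs_le.1 htt').2]))
    (fun _ ht _ htt' => mem_Ici.2 (by linarith [mem_Ici.1 ht, (abs_le.1 htt').2]))
    (hLip _ (abs_self_sub_add_le hδ a)) (hLip _ (abs_self_sub_sub_le hδ a))

theorem StronglyClose.hausdorffEDist_ival_le (h : StronglyClose δ X X' s s') (hδ : 0 ≤ δ)
    {r : ℝ≥0∞} (hLip : ∀ a' b', |a - a'| ≤ δ → |b - b'| ≤ δ →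
      hausdorffEDist (ival X s a b) (ival X s a' b') ≤ r) :
    hausdorffEDist (ival X s a b) (ival X' s' a b) ≤ r + ENNReal.ofReal δ :=
  h.hausdorffEDist_levelSet_le (S := Icc a b) (Sin := Icc (a + δ) (b - δ))
    (Sout := Icc (a - δ) (b + δ))
    (fun _ ht _ htt' =>
      ⟨by linarith [ht.1, (abs_le.1 htt').2], by linarith [ht.2, (abs_le.1 htt').1]⟩)
    (fun _ ht _ htt' =>
      ⟨by linarith [ht.1, (abs_le.1 htt').2], by linarith [ht.2, (abs_le.1 htt').1]⟩)
    (hLip _ _ (abs_self_sub_add_le hδ a) (abs_self_sub_sub_le hδ b))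
    (hLip _ _ (abs_self_sub_sub_le hδ a) (abs_self_sub_add_le hδ b))

theorem StronglyClose.diagDist_le (h : StronglyClose δ X X' s s') (hδ : 0 ≤ δ) {v₁ v₂ : ℝ}
    {r : ℝ≥0∞} (hv : v₁ + δ ≤ v₂) (hLip : ∀ a b, |v₁ - a| ≤ δ → |v₂ - b| ≤ δ →
      hausdorffEDist (ival X s v₁ v₂) (ival X s a b) ≤ r) :
    diagDist (Dv X s (v₁, v₂)) (Dv X' s' (v₁, v₂)) ≤ r + ENNReal.ofReal δ := by
  have hv₁ : |v₁ - v₁| ≤ δ := by rwa [sub_self, abs_zero]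
  have hv₂ : |v₂ - v₂| ≤ δ := by rwa [sub_self, abs_zero]
  refine max_le ?_ (max_le (h.hausdorffEDist_ival_le hδ hLip) ?_)
  · refine h.hausdorffEDist_sub_le hδ fun b hb => ?_
    have hv₁b : v₁ ≤ b := by linarith [(abs_le.1 hb).2]
    exact (hausdorffEDist_sub_le_ival (by linarith) hv₁b).trans (hLip _ _ hv₁ hb)
  · refine h.hausdorffEDist_supl_le hδ fun a ha => ?_
    have hav₂ : a ≤ v₂ := by linarith [(abs_le.1 ha).1]
    exact (hausdorffEDist_supl_le_ival (by linarith) hav₂).trans (hLip _ _ ha hv₂)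

end LevelSets

theorem forgetful_and_diagram_lipschitz_general {N : ℕ}
    (X : Set (EuclideanSpace ℝ (Fin N))) (s : EuclideanSpace ℝ (Fin N) → ℝ) :
    (∀ u ∈ Set.Ioo (0 : ℝ) 1, ∀ K : ℝ, 0 ≤ K → ∀ ρ : ℝ, 0 < ρ →
      Set.Ioo (u - ρ) (u + ρ) ⊆ Set.Ioo (0 : ℝ) 1 →
      (∀ a ∈ Set.Ioo (u - ρ) (u + ρ), ∀ b ∈ Set.Ioo (u - ρ) (u + ρ),
        EMetric.hausdorffEdist (sub X s a) (sub X s b) ≤ ENNReal.ofReal (K * |a - b|)) →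
      ∃ δ₀ : ℝ, 0 < δ₀ ∧ ∀ δ : ℝ, 0 < δ → δ ≤ δ₀ →
        ∀ (X' : Set (EuclideanSpace ℝ (Fin N))) (s' : EuclideanSpace ℝ (Fin N) → ℝ),
          (∀ y ∈ X', s' y ∈ Set.Icc (0 : ℝ) 1) →
          StronglyClose δ X X' s s' →
          max (EMetric.hausdorffEdist X X')
            (EMetric.hausdorffEdist (sub X s u) (sub X' s' u)) ≤
              ENNReal.ofReal ((K + 1) * δ)) ∧
    (∀ v₁ v₂ : ℝ, (v₁, v₂) ∈ Omega → ∀ K : ℝ, 0 ≤ K → ∀ ρ : ℝ, 0 < ρ →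
      (∀ a ∈ Set.Ioo (v₁ - ρ) (v₁ + ρ), ∀ a' ∈ Set.Ioo (v₁ - ρ) (v₁ + ρ),
       ∀ b ∈ Set.Ioo (v₂ - ρ) (v₂ + ρ), ∀ b' ∈ Set.Ioo (v₂ - ρ) (v₂ + ρ),
        a ≤ b → a' ≤ b' →
        EMetric.hausdorffEdist (ival X s a b) (ival X s a' b') ≤
          ENNReal.ofReal (K * max |a - a'| |b - b'|)) →
      ∃ δ₀ : ℝ, 0 < δ₀ ∧ ∀ δ : ℝ, 0 < δ → δ ≤ δ₀ →
        ∀ (X' : Set (EuclideanSpace ℝ (Fin N))) (s' : EuclideanSpace ℝ (Fin N) → ℝ),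
          (∀ y ∈ X', s' y ∈ Set.Icc (0 : ℝ) 1) →
          StronglyClose δ X X' s s' →
          diagDist (Dv X s (v₁, v₂)) (Dv X' s' (v₁, v₂)) ≤
            ENNReal.ofReal ((K + 1) * δ)) := by
  have center_mem : ∀ {c ρ : ℝ}, 0 < ρ → c ∈ Ioo (c - ρ) (c + ρ) := fun {c ρ} hρ =>
    Real.ball_eq_Ioo c ρ ▸ mem_ball_self hρ
  refine ⟨fun u _ K hK ρ hρ _ hLip => ⟨ρ / 2, half_pos hρ, fun δ hδ hδ₀ X' s' _ h => ?_⟩,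
    fun v₁ v₂ hv K hK ρ hρ hLip => ⟨min (ρ / 2) ((v₂ - v₁) / 2),
      lt_min (half_pos hρ) (by linarith [hv.2.1]), fun δ hδ hδ₀ X' s' _ h => ?_⟩⟩
  · have hδρ : δ < ρ := hδ₀.trans_lt (half_lt_self hρ)
    rw [← ofReal_mul_add_ofReal hK hδ.le]
    refine max_le (h.hausdorffEDist_le.trans le_add_self)
      (h.hausdorffEDist_sub_le hδ.le fun b hb => ?_)
    exact (hLip u (center_mem hρ) b (mem_Ioo_of_abs_sub_le hb hδρ)).trans
      (ENNReal.ofReal_le_ofReal (mul_le_mul_of_nonneg_left hb hK))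
  · obtain ⟨hδρ, hδv⟩ := le_min_iff.1 hδ₀
    replace hδρ : δ < ρ := hδρ.trans_lt (half_lt_self hρ)
    rw [← ofReal_mul_add_ofReal hK hδ.le]
    refine h.diagDist_le hδ.le (by linarith) fun a b ha hb => ?_
    have hab : a ≤ b := by linarith [(abs_le.1 ha).1, (abs_le.1 hb).2]
    exact (hLip v₁ (center_mem hρ) a (mem_Ioo_of_abs_sub_le ha hδρ) v₂ (center_mem hρ) b
      (mem_Ioo_of_abs_sub_le hb hδρ) hv.2.1.le hab).trans
      (ENNReal.ofReal_le_ofReal (mul_le_mul_of_nonneg_left (max_le ha hb) hK))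

/-- If the sublevel sets (resp. interval level sets) of `(X,s)` vary `K`-Lipschitz-ly in
the parameter near `u` (resp. near `v`), then the forgetful map `F_u` (resp. the diagram
map `D_v`) is `(K+1)`-Lipschitz at `(X,s)`. -/
theorem forgetful_and_diagram_lipschitz {N : ℕ}
    (X : Set (EuclideanSpace ℝ (Fin N))) (s : EuclideanSpace ℝ (Fin N) → ℝ)
    (hs : ∀ x ∈ X, s x ∈ Set.Icc (0 : ℝ) 1) :
    (∀ u ∈ Set.Ioo (0 : ℝ) 1, ∀ K : ℝ, 0 ≤ K → ∀ ρ : ℝ, 0 < ρ →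
      Set.Ioo (u - ρ) (u + ρ) ⊆ Set.Ioo (0 : ℝ) 1 →
      (∀ a ∈ Set.Ioo (u - ρ) (u + ρ), ∀ b ∈ Set.Ioo (u - ρ) (u + ρ),
        EMetric.hausdorffEdist (sub X s a) (sub X s b) ≤ ENNReal.ofReal (K * |a - b|)) →
      ∃ δ₀ : ℝ, 0 < δ₀ ∧ ∀ δ : ℝ, 0 < δ → δ ≤ δ₀ →
        ∀ (X' : Set (EuclideanSpace ℝ (Fin N))) (s' : EuclideanSpace ℝ (Fin N) → ℝ),
          (∀ y ∈ X', s' y ∈ Set.Icc (0 : ℝ) 1) →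
          StronglyClose δ X X' s s' →
          max (EMetric.hausdorffEdist X X')
            (EMetric.hausdorffEdist (sub X s u) (sub X' s' u)) ≤
              ENNReal.ofReal ((K + 1) * δ)) ∧
    (∀ v₁ v₂ : ℝ, (v₁, v₂) ∈ Omega → ∀ K : ℝ, 0 ≤ K → ∀ ρ : ℝ, 0 < ρ →
      (∀ a ∈ Set.Ioo (v₁ - ρ) (v₁ + ρ), ∀ a' ∈ Set.Ioo (v₁ - ρ) (v₁ + ρ),
       ∀ b ∈ Set.Ioo (v₂ - ρ) (v₂ + ρ), ∀ b' ∈ Set.Ioo (v₂ - ρ) (v₂ + ρ),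
        a ≤ b → a' ≤ b' →
        EMetric.hausdorffEdist (ival X s a b) (ival X s a' b') ≤
          ENNReal.ofReal (K * max |a - a'| |b - b'|)) →
      ∃ δ₀ : ℝ, 0 < δ₀ ∧ ∀ δ : ℝ, 0 < δ → δ ≤ δ₀ →
        ∀ (X' : Set (EuclideanSpace ℝ (Fin N))) (s' : EuclideanSpace ℝ (Fin N) → ℝ),
          (∀ y ∈ X', s' y ∈ Set.Icc (0 : ℝ) 1) →
          StronglyClose δ X X' s s' →
          diagDist (Dv X s (v₁, v₂)) (Dv X' s' (v₁, v₂)) ≤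
            ENNReal.ofReal ((K + 1) * δ)) :=
  forgetful_and_diagram_lipschitz_general X s

end Stmt11
end

section
/- Let X be a metric space, X_p ⊆ X a closed subset, and X_q := X ∖ X_p. Let Y be a first-countable, locally compact Hausdorff topological space, and let π : X → Y be a continuous, proper, surjective map such that for every y₀ ∈ Y the fibers vary continuously in the extended Hausdorff distance: hausdorffEdist(π⁻¹({y}), π⁻¹({y₀})) → 0 as y → y₀, and hausdorffEdist(π⁻¹({y}) ∩ X_p, π⁻¹({y₀}) ∩ X_p) → 0 as y → y₀. Let f : X → ℝ be upper semicontinuous on X and continuous on X_p and on X_q (with their subspace topologies). Then the function g : Y → ℝ defined by g(y) := sup{ f(x) : x ∈ π⁻¹({y}) } is well-defined (the supremum is finite, indeed attained on each fiber) and continuous. -/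
open Metric Set Filter
open scoped ENNReal Topology

theorem usc_exists_max {X : Type*} [TopologicalSpace X] {f : X → ℝ}
    (hf : UpperSemicontinuous f) {s : Set X} (hs : IsCompact s) (hne : s.Nonempty) :
    ∃ x ∈ s, ∀ x' ∈ s, f x' ≤ f x := by
  by_contra h
  push_neg at h
  obtain ⟨t, ht⟩ := hs.elim_finite_subcover (fun x : s => {z | f z < f x})
    (fun x => hf.isOpen_preimage _) (fun z hz => by
      obtain ⟨x', hx's, hx'⟩ := h z hz
      exact mem_iUnion.2 ⟨⟨x', hx's⟩, hx'⟩)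
  have htne : t.Nonempty := by
    obtain ⟨z, hz⟩ := hne
    obtain ⟨i, hi, _⟩ := mem_iUnion₂.1 (ht hz)
    exact ⟨i, hi⟩
  obtain ⟨b, hbt, hb⟩ := t.exists_max_image (fun x : s => f x) htne
  obtain ⟨j, hjt, hj⟩ := mem_iUnion₂.1 (ht b.2)
  exact absurd (hb j hjt) (not_le.2 hj)

/-- Fiberwise suprema of a function which is upper semicontinuous and continuous on the
two strata, along a proper map with continuously varying fibers, are attained and vary
continuously. -/
theorem fiberwise_sup_continuous {X : Type*} [MetricSpace X]
    {Y : Type*} [TopologicalSpace Y]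
    [FirstCountableTopology Y] [LocallyCompactSpace Y] [T2Space Y]
    (Xp : Set X) (hXp : IsClosed Xp)
    (π : X → Y) (hπc : Continuous π)
    (hproper : ∀ K : Set Y, IsCompact K → IsCompact (π ⁻¹' K))
    (hsurj : Function.Surjective π)
    (hfib : ∀ y₀ : Y,
      Tendsto (fun y : Y => EMetric.hausdorffEdist (π ⁻¹' {y}) (π ⁻¹' {y₀}))
        (𝓝 y₀) (𝓝 0))
    (hfibp : ∀ y₀ : Y,
      Tendsto (fun y : Y => EMetric.hausdorffEdist (π ⁻¹' {y} ∩ Xp) (π ⁻¹' {y₀} ∩ Xp))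
        (𝓝 y₀) (𝓝 0))
    (f : X → ℝ) (hfu : UpperSemicontinuous f)
    (hfp : ContinuousOn f Xp) (hfq : ContinuousOn f Xpᶜ) :
    (∀ y : Y, ∃ x ∈ π ⁻¹' {y}, ∀ x' ∈ π ⁻¹' {y}, f x' ≤ f x) ∧
    Continuous (fun y : Y => sSup (f '' (π ⁻¹' {y}))) := by
  have hKfib : ∀ y : Y, IsCompact (π ⁻¹' {y}) := fun y => hproper _ isCompact_singleton
  have hnefib : ∀ y : Y, (π ⁻¹' {y}).Nonempty := fun y => hsurj y
  have hmax : ∀ y : Y, ∃ x ∈ π ⁻¹' {y}, ∀ x' ∈ π ⁻¹' {y}, f x' ≤ f x :=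
    fun y => usc_exists_max hfu (hKfib y) (hnefib y)
  refine ⟨hmax, ?_⟩
  choose m hm hmax' using hmax
  set g : Y → ℝ := fun y => sSup (f '' (π ⁻¹' {y})) with hg
  have hgeq : ∀ y : Y, g y = f (m y) := by
    intro y
    refine le_antisymm (csSup_le ((hnefib y).image f) ?_) (le_csSup ⟨f (m y), ?_⟩
      (mem_image_of_mem f (hm y)))
    · rintro r ⟨x, hx, rfl⟩; exact hmax' y x hx
    · rintro r ⟨x, hx, rfl⟩; exact hmax' y x hx
  rw [continuous_iff_continuousAt]
  intro y₀
  rw [ContinuousAt, Metric.tendsto_nhds]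
  intro ε hε
  have hub : ∀ᶠ y in 𝓝 y₀, g y < g y₀ + ε := by
    obtain ⟨V, hVcomp, hVmem⟩ := exists_compact_mem_nhds y₀
    have hKV : IsCompact (π ⁻¹' V) := hproper V hVcomp
    have hUopen : IsOpen {x | f x < g y₀ + ε} := hfu.isOpen_preimage _
    have hC : IsCompact (π ⁻¹' V \ {x | f x < g y₀ + ε}) := hKV.diff hUopen
    have hCcl : IsClosed (π '' (π ⁻¹' V \ {x | f x < g y₀ + ε})) :=
      (hC.image hπc).isClosed
    have hy₀ : y₀ ∉ π '' (π ⁻¹' V \ {x | f x < g y₀ + ε}) := by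
      rintro ⟨x, ⟨-, hx2⟩, rfl⟩
      exact hx2 (lt_of_le_of_lt (by rw [hgeq]; exact hmax' _ x rfl) (lt_add_of_pos_right _ hε))
    filter_upwards [hVmem, hCcl.isOpen_compl.mem_nhds hy₀] with y hyV hyC
    rw [hgeq y]
    by_contra hcon
    exact hyC ⟨m y, ⟨by rw [mem_preimage, show π (m y) = y from hm y]; exact hyV, hcon⟩, hm y⟩
  have hlb : ∀ᶠ y in 𝓝 y₀, g y₀ - ε < g y := by
    have aux : ∀ S : Set X, m y₀ ∈ S →
        Tendsto (fun y : Y => EMetric.hausdorffEdist (π ⁻¹' {y} ∩ S) (π ⁻¹' {y₀} ∩ S))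
          (𝓝 y₀) (𝓝 0) →
        (∀ᶠ x in 𝓝[S] (m y₀), f (m y₀) - ε < f x) →
        ∀ᶠ y in 𝓝 y₀, g y₀ - ε < g y := by
      intro S hmS htend hev
      obtain ⟨δ, hδ, hball⟩ := Metric.mem_nhdsWithin_iff.1 hev
      filter_upwards [htend.eventually_lt_const (ENNReal.ofReal_pos.2 hδ)] with y hy
      obtain ⟨x, hxmem, hxd⟩ := EMetric.exists_edist_lt_of_hausdorffEdist_lt
        (s := π ⁻¹' {y₀} ∩ S) (t := π ⁻¹' {y} ∩ S) (x := m y₀) ⟨hm y₀, hmS⟩ (by rwa [EMetric.hausdorffEdist_comm])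
      have hdx : dist x (m y₀) < δ := by
        rw [dist_comm]; exact edist_lt_ofReal.1 hxd
      have hfx : f (m y₀) - ε < f x := hball ⟨hdx, hxmem.2⟩
      calc g y₀ - ε = f (m y₀) - ε := by rw [hgeq]
        _ < f x := hfx
        _ ≤ f (m y) := hmax' y x hxmem.1
        _ = g y := (hgeq y).symm
    by_cases hmem : m y₀ ∈ Xp
    · refine aux Xp hmem (hfibp y₀) ?_
      have := (hfp (m y₀) hmem).eventually (eventually_gt_nhds
        (show f (m y₀) - ε < f (m y₀) by linarith))
      exact this
    · refine aux univ (mem_univ _) (by simpa using hfib y₀) ?_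
      have hca : ContinuousAt f (m y₀) :=
        hfq.continuousAt (hXp.isOpen_compl.mem_nhds hmem)
      rw [nhdsWithin_univ]
      exact hca.eventually (eventually_gt_nhds
        (show f (m y₀) - ε < f (m y₀) by linarith))
  filter_upwards [hub, hlb] with y h1 h2
  rw [Real.dist_eq, abs_sub_lt_iff]
  constructor <;> linarith
end

section
/- Let X_p and X_q be disjoint subsets of ℝ^N, set X := X_p ∪ X_q, assume X_p is closed in X, and for x ∈ X let S(x) ∈ {X_p, X_q} be the stratum containing x. Assume that for each x ∈ X there is a linear subspace T(x) ⊆ ℝ^N whose underlying set equals the tangent cone tangentConeAt ℝ (S(x)) x. Define β on X × X by β(x,y) := dist( (x−y)/‖x−y‖, T(x) ) for x ≠ y and β(x,x) := 0 (this equals the distance of the secant line spanned by x−y to T(x)). Say that a sequence of linear subspaces Vₙ converges to a linear subspace V if d_H(Vₙ ∩ B̄₁(0), V ∩ B̄₁(0)) → 0. Assume: (continuity of tangent spaces) the map x ↦ T(x) is continuous on X_p and on X_q in this sense; (Whitney condition (a)) for every y ∈ X_p and every sequence xₙ ∈ X_q with xₙ → y such that T(xₙ) converges to a linear subspace τ,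 one has T(y) ⊆ τ; (Whitney condition (b)) for every y ∈ X_p, every sequence (xₙ) lying entirely in X_q or entirely in X_p with xₙ → y, and every sequence yₙ ∈ X_p with yₙ → y and xₙ ≠ yₙ for all n, if the secant lines span(xₙ − yₙ) converge to a line l and T(xₙ) converges to a linear subspace τ, then l ⊆ τ. Then the restriction of β to X × X_p is upper semicontinuous (with respect to the subspace topology of X × X_p ⊆ ℝ^N × ℝ^N). -/
/-! Suppose `c ≤ β(uₙ, wₙ)` along a sequence `(uₙ, wₙ) → (x, y)` in `X × X_p`. By compactness of
the Grassmannian we may assume `T(uₙ) → τ`, and along a further subsequence the unit secant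
directions of `(uₙ, wₙ)` converge to some `s`. The distance to a subspace is upper semicontinuous
for Hausdorff convergence of unit balls, so `c ≤ dist(s, τ)`. If `x ≠ y`, then
`s = (x - y)/‖x - y‖` and `T(x) ⊆ τ`: pass to a subsequence of `uₙ` inside one stratum; if it
is the stratum of `x`, use continuity of `T` there, otherwise `x ∈ X_p` (as `X_p` is closed in
`X`) and Whitney (a) applies. Hence `c ≤ β(x, y)`. If `x = y`, Whitney (b) gives `s ∈ τ`, so
`c ≤ 0 = β(x, x)`. -/

open Classical Metric Set Filter
open scoped Topology

namespace Stmt16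

variable {N : ℕ}

/-- Convergence of a sequence of linear subspaces to a linear subspace: Hausdorff
convergence of the intersections with the closed unit ball. -/
def SubConv (V : ℕ → Submodule ℝ (EuclideanSpace ℝ (Fin N)))
    (Vlim : Submodule ℝ (EuclideanSpace ℝ (Fin N))) : Prop :=
  Tendsto (fun n => EMetric.hausdorffEdist
      ((V n : Set (EuclideanSpace ℝ (Fin N))) ∩
        Metric.closedBall (0 : EuclideanSpace ℝ (Fin N)) 1)
      ((Vlim : Set (EuclideanSpace ℝ (Fin N))) ∩
        Metric.closedBall (0 : EuclideanSpace ℝ (Fin N)) 1)) atTop (𝓝 0)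

/-- The function `β(x,y)`: the distance of the normalized secant direction
`(x−y)/‖x−y‖` to the tangent space `T(x)` (equivalently, the distance of the secant
line spanned by `x−y` to `T(x)`), with `β(x,x) := 0`. -/
noncomputable def beta (T : EuclideanSpace ℝ (Fin N) → Submodule ℝ (EuclideanSpace ℝ (Fin N)))
    (x y : EuclideanSpace ℝ (Fin N)) : ℝ :=
  if x = y then 0
  else Metric.infDist (‖x - y‖⁻¹ • (x - y)) (T x : Set (EuclideanSpace ℝ (Fin N)))

local notation "E" => EuclideanSpace ℝ (Fin N)

section NormedSpace

variable {F : Type*} [NormedAddCommGroup F] [NormedSpace ℝ F]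

noncomputable def secantDir (x y : F) : F := ‖x - y‖⁻¹ • (x - y)

lemma norm_secantDir {x y : F} (h : x ≠ y) : ‖secantDir x y‖ = 1 :=
  norm_smul_inv_norm (sub_ne_zero.mpr h)

lemma span_secantDir {x y : F} (h : x ≠ y) : ℝ ∙ secantDir x y = ℝ ∙ (x - y) :=
  Submodule.span_singleton_smul_eq
    (inv_ne_zero (norm_ne_zero_iff.mpr (sub_ne_zero.mpr h))).isUnit _

lemma _root_.Filter.Tendsto.secantDir {ι : Type*} {l : Filter ι} {u w : ι → F} {x y : F}
    (hu : Tendsto u l (𝓝 x)) (hw : Tendsto w l (𝓝 y)) (h : x ≠ y) :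
    Tendsto (fun n => secantDir (u n) (w n)) l (𝓝 (secantDir x y)) :=
  ((hu.sub hw).norm.inv₀ (norm_ne_zero_iff.mpr (sub_ne_zero.mpr h))).smul (hu.sub hw)

lemma infEDist_span_singleton_inter_closedBall_le {a b x : F} (ha : ‖a‖ = 1) (hb : ‖b‖ = 1)
    (hx : x ∈ ((ℝ ∙ a : Submodule ℝ F) : Set F) ∩ closedBall 0 1) :
    infEDist x (((ℝ ∙ b : Submodule ℝ F) : Set F) ∩ closedBall 0 1) ≤ edist a b := by
  obtain ⟨hxa, hx1⟩ := hx
  obtain ⟨t, rfl⟩ := Submodule.mem_span_singleton.mp hxa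
  have ht : ‖t‖₊ ≤ 1 := by simpa [← NNReal.coe_le_one, norm_smul, ha] using hx1
  have htb : t • b ∈ ((ℝ ∙ b : Submodule ℝ F) : Set F) ∩ closedBall 0 1 :=
    ⟨Submodule.smul_mem _ _ (Submodule.mem_span_singleton_self b), by
      simpa [norm_smul, hb, ← NNReal.coe_le_one] using ht⟩
  calc infEDist (t • a) _ ≤ edist (t • a) (t • b) := infEDist_le_edist_of_mem htb
    _ = ‖t‖₊ * edist a b := edist_smul₀ t a b
    _ ≤ edist a b := mul_le_of_le_one_left' (by exact_mod_cast ht)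

lemma hausdorffEDist_span_singleton_inter_closedBall_le {a b : F} (ha : ‖a‖ = 1)
    (hb : ‖b‖ = 1) :
    hausdorffEDist (((ℝ ∙ a : Submodule ℝ F) : Set F) ∩ closedBall 0 1)
      (((ℝ ∙ b : Submodule ℝ F) : Set F) ∩ closedBall 0 1) ≤ edist a b :=
  hausdorffEDist_le_of_infEDist
    (fun _ hx => infEDist_span_singleton_inter_closedBall_le ha hb hx)
    (fun _ hx => edist_comm a b ▸ infEDist_span_singleton_inter_closedBall_le hb ha hx)

lemma infEDist_range_inter_closedBall_le {P Q : F →L[ℝ] F} (hP : IsIdempotentElem P)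
    (hQ : ‖Q‖ ≤ 1) {x : F} (hx : x ∈ range P ∩ closedBall 0 1) :
    infEDist x (range Q ∩ closedBall 0 1) ≤ edist P Q := by
  obtain ⟨⟨y, rfl⟩, hx1⟩ := hx
  have hx1 : ‖P y‖ ≤ 1 := mem_closedBall_zero_iff.mp hx1
  have hQx : Q (P y) ∈ range Q ∩ closedBall 0 1 :=
    ⟨⟨P y, rfl⟩, mem_closedBall_zero_iff.mpr ((Q.le_of_opNorm_le hQ _).trans (by simpa))⟩
  have hPP : P (P y) = P y := congr($hP y)
  calc infEDist (P y) _ ≤ edist (P y) (Q (P y)) := infEDist_le_edist_of_mem hQx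
    _ = ENNReal.ofReal ‖(P - Q) (P y)‖ := by
      rw [edist_dist, dist_eq_norm, sub_apply, hPP]
    _ ≤ ENNReal.ofReal ‖P - Q‖ := by
      gcongr
      exact ((P - Q).le_opNorm _).trans (mul_le_of_le_one_right (norm_nonneg _) hx1)
    _ = edist P Q := by rw [edist_dist, dist_eq_norm]

lemma hausdorffEDist_range_inter_closedBall_le {P Q : F →L[ℝ] F} (hP : IsIdempotentElem P)
    (hQ : IsIdempotentElem Q) (hP1 : ‖P‖ ≤ 1) (hQ1 : ‖Q‖ ≤ 1) :
    hausdorffEDist (range P ∩ closedBall 0 1) (range Q ∩ closedBall 0 1) ≤ edist P Q :=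
  hausdorffEDist_le_of_infEDist (fun _ hx => infEDist_range_inter_closedBall_le hP hQ1 hx)
    (fun _ hx => edist_comm P Q ▸ infEDist_range_inter_closedBall_le hQ hP1 hx)

end NormedSpace

lemma infDist_inter_closedBall_le {F : Type*} [NormedAddCommGroup F] [InnerProductSpace ℝ F]
    (K : Submodule ℝ F) [K.HasOrthogonalProjection] {v : F} (hv : ‖v‖ ≤ 1) :
    infDist v ((K : Set F) ∩ closedBall 0 1) ≤ infDist v K := by
  have hPv : K.starProjection v ∈ (K : Set F) ∩ closedBall 0 1 :=
    ⟨K.starProjection_apply_mem v, mem_closedBall_zero_iff.mpr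
      ((K.starProjection.le_of_opNorm_le K.starProjection_norm_le v).trans (by simpa))⟩
  refine (infDist_le_dist_of_mem hPv).trans ((le_infDist ⟨0, K.zero_mem⟩).mpr fun w hw => ?_)
  rw [dist_eq_norm, dist_eq_norm, Submodule.starProjection_minimal]
  exact ciInf_le ⟨0, fun _ ⟨_, h⟩ => h ▸ norm_nonneg _⟩ (⟨w, hw⟩ : K)

lemma upperSemicontinuousOn_of_forall_seq {X : Type*} [TopologicalSpace X]
    [FirstCountableTopology X] {f : X → ℝ} {s : Set X}
    (h : ∀ x ∈ s, ∀ q : ℕ → X, (∀ n, q n ∈ s) → Tendsto q atTop (𝓝 x) →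
      ∀ c, (∀ n, c ≤ f (q n)) → c ≤ f x) :
    UpperSemicontinuousOn f s := by
  intro x hx c hc
  by_contra hcon
  obtain ⟨q, hqx, hq⟩ := exists_seq_forall_of_frequently
    ((not_eventually.mp hcon).and_eventually self_mem_nhdsWithin)
  exact (h x hx q (fun n => (hq n).2) (hqx.mono_right nhdsWithin_le_nhds) c
    (fun n => not_lt.mp (hq n).1)).not_gt hc

lemma exists_strictMono_forall_mem_or_forall_mem {α : Type*} {A B : Set α} {u : ℕ → α}
    (hu : ∀ n, u n ∈ A ∪ B) :
    ∃ φ : ℕ → ℕ, StrictMono φ ∧ ((∀ n, u (φ n) ∈ A) ∨ (∀ n, u (φ n) ∈ B)) := by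
  by_cases hA : ∃ᶠ n in atTop, u n ∈ A
  · obtain ⟨φ, hφ, hφA⟩ := extraction_of_frequently_atTop hA
    exact ⟨φ, hφ, .inl hφA⟩
  · have hB : ∃ᶠ n in atTop, u n ∈ B :=
      ((not_frequently.mp hA).mono fun n hn => (hu n).resolve_left hn).frequently
    obtain ⟨φ, hφ, hφB⟩ := extraction_of_frequently_atTop hB
    exact ⟨φ, hφ, .inr hφB⟩

section Grassmannian

lemma SubConv.of_hausdorffEDist_le {V : ℕ → Submodule ℝ E} {τ : Submodule ℝ E}
    {b : ℕ → ENNReal} (hb : Tendsto b atTop (𝓝 0))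
    (h : ∀ n, hausdorffEDist ((V n : Set E) ∩ closedBall 0 1) ((τ : Set E) ∩ closedBall 0 1)
      ≤ b n) :
    SubConv V τ :=
  tendsto_of_tendsto_of_tendsto_of_le_of_le tendsto_const_nhds hb (fun _ => zero_le) h

lemma subConv_span_singleton {a : ℕ → E} {b : E} (ha : ∀ n, ‖a n‖ = 1) (hb : ‖b‖ = 1)
    (hab : Tendsto a atTop (𝓝 b)) :
    SubConv (fun n => ℝ ∙ a n) (ℝ ∙ b) :=
  .of_hausdorffEDist_le (tendsto_iff_edist_tendsto_0.mp hab)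
    fun n => hausdorffEDist_span_singleton_inter_closedBall_le (ha n) hb

/-- Compactness of the Grassmannian: orthogonal projections lie in the compact set of idempotents
of norm `≤ 1`, and the range of such an operator depends continuously on it. -/
lemma exists_strictMono_subConv (V : ℕ → Submodule ℝ E) :
    ∃ φ : ℕ → ℕ, StrictMono φ ∧ ∃ τ : Submodule ℝ E, SubConv (fun n => V (φ n)) τ := by
  have hK : IsCompact ({P : E →L[ℝ] E | IsIdempotentElem P} ∩ closedBall 0 1) :=
    (isCompact_closedBall 0 1).inter_left (isClosed_eq (continuous_id.mul continuous_id)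
      continuous_id)
  obtain ⟨P, ⟨hP, hP1⟩, φ, hφ, hlim⟩ := hK.tendsto_subseq (x := fun n => (V n).starProjection)
    fun n => ⟨(V n).isIdempotentElem_starProjection,
      mem_closedBall_zero_iff.mpr (V n).starProjection_norm_le⟩
  refine ⟨φ, hφ, LinearMap.range (P : E →ₗ[ℝ] E), .of_hausdorffEDist_le
    (tendsto_iff_edist_tendsto_0.mp hlim) fun n => ?_⟩
  have hV : (V (φ n) : Set E) = range (V (φ n)).starProjection := by
    conv_lhs => rw [← (V (φ n)).range_starProjection]
    exact LinearMap.coe_range _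
  rw [hV]
  exact hausdorffEDist_range_inter_closedBall_le (V (φ n)).isIdempotentElem_starProjection hP
    (V (φ n)).starProjection_norm_le (mem_closedBall_zero_iff.mp hP1)

lemma SubConv.le_infDist {V : ℕ → Submodule ℝ E} {τ : Submodule ℝ E} (h : SubConv V τ)
    {a : ℕ → E} {b : E} (hb : ‖b‖ ≤ 1) (hab : Tendsto a atTop (𝓝 b)) {c : ℝ}
    (hc : ∀ n, c ≤ infDist (a n) (V n)) :
    c ≤ infDist b τ := by
  set B : Set E := closedBall 0 1
  have hE : Tendsto (fun n => hausdorffEDist ((τ : Set E) ∩ B) ((V n : Set E) ∩ B))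
      atTop (𝓝 0) :=
    h.congr fun _ => hausdorffEDist_comm
  have hdist : Tendsto (fun n => hausdorffDist ((τ : Set E) ∩ B) ((V n : Set E) ∩ B))
      atTop (𝓝 0) :=
    (ENNReal.tendsto_toReal ENNReal.zero_ne_top).comp hE
  have hbound : Tendsto (fun n => infDist (a n) ((τ : Set E) ∩ B) +
      hausdorffDist ((τ : Set E) ∩ B) ((V n : Set E) ∩ B)) atTop
      (𝓝 (infDist b ((τ : Set E) ∩ B))) := by
    simpa using ((continuous_infDist_pt _).tendsto b |>.comp hab).add hdist
  have hfin : ∀ᶠ n in atTop,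
      hausdorffEDist ((τ : Set E) ∩ B) ((V n : Set E) ∩ B) ≠ ⊤ :=
    hE.eventually_ne ENNReal.zero_ne_top
  refine le_trans (ge_of_tendsto hbound (hfin.mono fun n hn => ?_))
    (infDist_inter_closedBall_le τ hb)
  calc c ≤ infDist (a n) (V n) := hc n
    _ ≤ infDist (a n) ((V n : Set E) ∩ B) :=
      infDist_le_infDist_of_subset inter_subset_left ⟨0, (V n).zero_mem, by simp [B]⟩
    _ ≤ _ := infDist_le_infDist_add_hausdorffDist hn

end Grassmannian

section Whitney

lemma beta_nonneg (T : E → Submodule ℝ E) (x y : E) : 0 ≤ beta T x y := by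
  unfold beta
  split_ifs
  exacts [le_rfl, infDist_nonneg]

lemma beta_of_ne (T : E → Submodule ℝ E) {x y : E} (h : x ≠ y) :
    beta T x y = infDist (secantDir x y) (T x) :=
  if_neg h

def TangentContinuousOn (T : E → Submodule ℝ E) (S : Set E) : Prop :=
  ∀ x ∈ S, ∀ u : ℕ → E, (∀ n, u n ∈ S) → Tendsto u atTop (𝓝 x) →
    SubConv (fun n => T (u n)) (T x)

def WhitneyA (Xp Xq : Set E) (T : E → Submodule ℝ E) : Prop :=
  ∀ y ∈ Xp, ∀ u : ℕ → E, (∀ n, u n ∈ Xq) → Tendsto u atTop (𝓝 y) →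
    ∀ τ : Submodule ℝ E, SubConv (fun n => T (u n)) τ → T y ≤ τ

def WhitneyB (Xp Xq : Set E) (T : E → Submodule ℝ E) : Prop :=
  ∀ y ∈ Xp, ∀ u : ℕ → E, ((∀ n, u n ∈ Xq) ∨ (∀ n, u n ∈ Xp)) → Tendsto u atTop (𝓝 y) →
    ∀ w : ℕ → E, (∀ n, w n ∈ Xp) → Tendsto w atTop (𝓝 y) → (∀ n, u n ≠ w n) →
    ∀ l τ : Submodule ℝ E, SubConv (fun n => ℝ ∙ (u n - w n)) l →
      SubConv (fun n => T (u n)) τ → l ≤ τ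

variable {Xp Xq : Set (EuclideanSpace ℝ (Fin N))}
  {T : EuclideanSpace ℝ (Fin N) → Submodule ℝ (EuclideanSpace ℝ (Fin N))}

lemma exists_strictMono_subConv_tangent_le (hdisj : Disjoint Xp Xq)
    (hclosed : ∀ x ∈ Xp ∪ Xq, x ∈ closure Xp → x ∈ Xp)
    (hTcontp : TangentContinuousOn T Xp) (hTcontq : TangentContinuousOn T Xq)
    (hWa : WhitneyA Xp Xq T) {x : E} (hx : x ∈ Xp ∪ Xq) {u : ℕ → E}
    (hu : ∀ n, u n ∈ Xp ∪ Xq) (hux : Tendsto u atTop (𝓝 x)) :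
    ∃ φ : ℕ → ℕ, StrictMono φ ∧
      ∃ τ : Submodule ℝ E, SubConv (fun n => T (u (φ n))) τ ∧ T x ≤ τ := by
  obtain ⟨φ, hφ, hφu⟩ := exists_strictMono_forall_mem_or_forall_mem hu
  have hφx := hux.comp hφ.tendsto_atTop
  rcases hφu, hx with ⟨hφp | hφq, hxp | hxq⟩
  · exact ⟨φ, hφ, T x, hTcontp x hxp _ hφp hφx, le_rfl⟩
  · have hxp := hclosed x (.inr hxq) (mem_closure_of_tendsto hφx (.of_forall hφp))
    exact absurd hxq (hdisj.notMem_of_mem_left hxp)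
  · obtain ⟨ψ, hψ, τ, hτ⟩ := exists_strictMono_subConv fun n => T (u (φ n))
    exact ⟨φ ∘ ψ, hφ.comp hψ, τ, hτ,
      hWa x hxp _ (fun n => hφq (ψ n)) (hφx.comp hψ.tendsto_atTop) τ hτ⟩
  · exact ⟨φ, hφ, T x, hTcontq x hxq _ hφq hφx, le_rfl⟩

lemma exists_strictMono_secantDir_mem (hWb : WhitneyB Xp Xq T) {y : E} (hy : y ∈ Xp)
    {u w : ℕ → E} (hu : ∀ n, u n ∈ Xp ∪ Xq) (huy : Tendsto u atTop (𝓝 y))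
    (hw : ∀ n, w n ∈ Xp) (hwy : Tendsto w atTop (𝓝 y)) (hne : ∀ n, u n ≠ w n) :
    ∃ φ : ℕ → ℕ, StrictMono φ ∧ ∃ (τ : Submodule ℝ E) (s : E),
      SubConv (fun n => T (u (φ n))) τ ∧
      Tendsto (fun n => secantDir (u (φ n)) (w (φ n))) atTop (𝓝 s) ∧ ‖s‖ = 1 ∧ s ∈ τ := by
  obtain ⟨φ₁, hφ₁, hstrat⟩ := exists_strictMono_forall_mem_or_forall_mem hu
  obtain ⟨s, hs, φ₂, hφ₂, hlim⟩ := (isCompact_sphere (0 : E) 1).tendsto_subseq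
    (x := fun n => secantDir (u (φ₁ n)) (w (φ₁ n)))
    fun n => mem_sphere_zero_iff_norm.mpr (norm_secantDir (hne _))
  obtain ⟨φ₃, hφ₃, τ, hτ⟩ := exists_strictMono_subConv fun n => T (u (φ₁ (φ₂ n)))
  set φ := φ₁ ∘ φ₂ ∘ φ₃
  have hφ : StrictMono φ := hφ₁.comp (hφ₂.comp hφ₃)
  have hs1 : ‖s‖ = 1 := mem_sphere_zero_iff_norm.mp hs
  have hlimφ := hlim.comp hφ₃.tendsto_atTop
  have hspan : SubConv (fun n => ℝ ∙ (u (φ n) - w (φ n))) (ℝ ∙ s) := by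
    simpa only [span_secantDir (hne _)] using
      subConv_span_singleton (fun n => norm_secantDir (hne (φ n))) hs1 hlimφ
  have hsτ := hWb y hy (u ∘ φ) (hstrat.symm.imp (fun h n => h _) fun h n => h _)
    (huy.comp hφ.tendsto_atTop) (w ∘ φ) (fun n => hw _) (hwy.comp hφ.tendsto_atTop)
    (fun n => hne _) _ τ hspan hτ
  exact ⟨φ, hφ, τ, s, hτ, hlimφ, hs1, hsτ (Submodule.mem_span_singleton_self s)⟩

lemma le_beta_of_forall_le (hdisj : Disjoint Xp Xq)
    (hclosed : ∀ x ∈ Xp ∪ Xq, x ∈ closure Xp → x ∈ Xp)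
    (hTcontp : TangentContinuousOn T Xp) (hTcontq : TangentContinuousOn T Xq)
    (hWa : WhitneyA Xp Xq T) (hWb : WhitneyB Xp Xq T) {x y : E} (hx : x ∈ Xp ∪ Xq)
    (hy : y ∈ Xp) {u w : ℕ → E} (hu : ∀ n, u n ∈ Xp ∪ Xq) (hw : ∀ n, w n ∈ Xp)
    (hux : Tendsto u atTop (𝓝 x)) (hwy : Tendsto w atTop (𝓝 y)) {c : ℝ}
    (hc : ∀ n, c ≤ beta T (u n) (w n)) :
    c ≤ beta T x y := by
  rcases le_or_gt c 0 with hc0 | hc0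
  · exact hc0.trans (beta_nonneg T x y)
  have hne : ∀ n, u n ≠ w n := fun n h => by
    have := hc n
    simp only [beta, h, if_true] at this
    linarith
  have hsec : ∀ n, c ≤ infDist (secantDir (u n) (w n)) (T (u n)) := fun n =>
    beta_of_ne T (hne n) ▸ hc n
  by_cases hxy : x = y
  · subst hxy
    obtain ⟨φ, -, τ, s, hτ, hs, hs1, hsτ⟩ :=
      exists_strictMono_secantDir_mem hWb hy hu hux hw hwy hne
    have := hτ.le_infDist hs1.le hs fun n => hsec (φ n)
    rw [infDist_zero_of_mem hsτ] at this
    linarith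
  obtain ⟨φ, hφ, τ, hτ, hTτ⟩ :=
    exists_strictMono_subConv_tangent_le hdisj hclosed hTcontp hTcontq hWa hx hu hux
  rw [beta_of_ne T hxy]
  calc c ≤ infDist (secantDir x y) τ :=
        hτ.le_infDist (norm_secantDir hxy).le ((hux.secantDir hwy hxy).comp hφ.tendsto_atTop)
          fun n => hsec (φ n)
    _ ≤ infDist (secantDir x y) (T x) := infDist_le_infDist_of_subset hTτ ⟨0, (T x).zero_mem⟩

end Whitney

theorem beta_upperSemicontinuousOn_general
    (Xp Xq : Set (EuclideanSpace ℝ (Fin N))) (hdisj : Disjoint Xp Xq)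
    (hclosed : ∀ x ∈ Xp ∪ Xq, x ∈ closure Xp → x ∈ Xp)
    (T : EuclideanSpace ℝ (Fin N) → Submodule ℝ (EuclideanSpace ℝ (Fin N)))
    (hTcontp : ∀ x ∈ Xp, ∀ u : ℕ → EuclideanSpace ℝ (Fin N), (∀ n, u n ∈ Xp) →
      Tendsto u atTop (𝓝 x) → SubConv (fun n => T (u n)) (T x))
    (hTcontq : ∀ x ∈ Xq, ∀ u : ℕ → EuclideanSpace ℝ (Fin N), (∀ n, u n ∈ Xq) →
      Tendsto u atTop (𝓝 x) → SubConv (fun n => T (u n)) (T x))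
    (hWa : ∀ y ∈ Xp, ∀ u : ℕ → EuclideanSpace ℝ (Fin N), (∀ n, u n ∈ Xq) →
      Tendsto u atTop (𝓝 y) → ∀ τ : Submodule ℝ (EuclideanSpace ℝ (Fin N)),
        SubConv (fun n => T (u n)) τ → T y ≤ τ)
    (hWb : ∀ y ∈ Xp, ∀ u : ℕ → EuclideanSpace ℝ (Fin N),
      ((∀ n, u n ∈ Xq) ∨ (∀ n, u n ∈ Xp)) → Tendsto u atTop (𝓝 y) →
      ∀ w : ℕ → EuclideanSpace ℝ (Fin N), (∀ n, w n ∈ Xp) → Tendsto w atTop (𝓝 y) →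
      (∀ n, u n ≠ w n) →
      ∀ l τ : Submodule ℝ (EuclideanSpace ℝ (Fin N)),
        SubConv (fun n => Submodule.span ℝ {u n - w n}) l →
        SubConv (fun n => T (u n)) τ → l ≤ τ) :
    UpperSemicontinuousOn
      (fun p : EuclideanSpace ℝ (Fin N) × EuclideanSpace ℝ (Fin N) => beta T p.1 p.2)
      ((Xp ∪ Xq) ×ˢ Xp) := by
  refine upperSemicontinuousOn_of_forall_seq fun p hp q hq hqp c hc => ?_
  exact le_beta_of_forall_le hdisj hclosed hTcontp hTcontq hWa hWb (mem_prod.mp hp).1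
    (mem_prod.mp hp).2 (fun n => (mem_prod.mp (hq n)).1) (fun n => (mem_prod.mp (hq n)).2)
    ((continuous_fst.tendsto p).comp hqp) ((continuous_snd.tendsto p).comp hqp) hc

/-- Whitney's condition (b) implies upper semicontinuity of `β` on `X × X_p`. -/
theorem beta_upperSemicontinuousOn
    (Xp Xq : Set (EuclideanSpace ℝ (Fin N))) (hdisj : Disjoint Xp Xq)
    (hclosed : ∀ x ∈ Xp ∪ Xq, x ∈ closure Xp → x ∈ Xp)
    (T : EuclideanSpace ℝ (Fin N) → Submodule ℝ (EuclideanSpace ℝ (Fin N)))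
    (hTp : ∀ x ∈ Xp, (T x : Set (EuclideanSpace ℝ (Fin N))) = tangentConeAt ℝ Xp x)
    (hTq : ∀ x ∈ Xq, (T x : Set (EuclideanSpace ℝ (Fin N))) = tangentConeAt ℝ Xq x)
    (hTcontp : ∀ x ∈ Xp, ∀ u : ℕ → EuclideanSpace ℝ (Fin N), (∀ n, u n ∈ Xp) →
      Tendsto u atTop (𝓝 x) → SubConv (fun n => T (u n)) (T x))
    (hTcontq : ∀ x ∈ Xq, ∀ u : ℕ → EuclideanSpace ℝ (Fin N), (∀ n, u n ∈ Xq) →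
      Tendsto u atTop (𝓝 x) → SubConv (fun n => T (u n)) (T x))
    (hWa : ∀ y ∈ Xp, ∀ u : ℕ → EuclideanSpace ℝ (Fin N), (∀ n, u n ∈ Xq) →
      Tendsto u atTop (𝓝 y) → ∀ τ : Submodule ℝ (EuclideanSpace ℝ (Fin N)),
        SubConv (fun n => T (u n)) τ → T y ≤ τ)
    (hWb : ∀ y ∈ Xp, ∀ u : ℕ → EuclideanSpace ℝ (Fin N),
      ((∀ n, u n ∈ Xq) ∨ (∀ n, u n ∈ Xp)) → Tendsto u atTop (𝓝 y) →
      ∀ w : ℕ → EuclideanSpace ℝ (Fin N), (∀ n, w n ∈ Xp) → Tendsto w atTop (𝓝 y) →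
      (∀ n, u n ≠ w n) →
      ∀ l τ : Submodule ℝ (EuclideanSpace ℝ (Fin N)),
        SubConv (fun n => Submodule.span ℝ {u n - w n}) l →
        SubConv (fun n => T (u n)) τ → l ≤ τ) :
    UpperSemicontinuousOn
      (fun p : EuclideanSpace ℝ (Fin N) × EuclideanSpace ℝ (Fin N) => beta T p.1 p.2)
      ((Xp ∪ Xq) ×ˢ Xp) :=
  beta_upperSemicontinuousOn_general Xp Xq hdisj hclosed T hTcontp hTcontq hWa hWb

end Stmt16
end
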